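/- arXiv:2603.15048 — 12 statements merged into one kernel-verified Lean document; each statement's English description precedes it below -/
import Mathlib

section
/- Let f : R → S be a homomorphism of associative rings. Then the forgetful (restriction of scalars) functor from left S-modules to left R-modules is fully faithful if and only if f is an epimorphism in the category of rings. -/
/-!
Let `f` be an epimorphism and `φ : M → N` an `R`-linear map between `S`-modules. The square-zero
endomorphism `n : (m, k) ↦ (0, φ m)` of `M × N` commutes with the action of `f(R)`, so the action
map `S → End_ℤ(M × N)` and its conjugate by the unit `1 + n` agree on `f(R)`, hence everywhere.
Thus `n` commutes with every `s : S`, which says that `φ` is `S`-linear. Conversely, if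
`g ∘ f = h ∘ f`, the identity of `T` is an `R`-linear map from `T` viewed as an `S`-module through
`g` to `T` viewed through `h`; fullness makes it `S`-linear, and evaluating at `1` gives `g = h`.
-/

universe u

/-- `f` is an epimorphism in the category of (associative unital) rings. -/
def RingHom.IsRingEpi {R S : Type u} [Ring R] [Ring S] (f : R →+* S) : Prop :=
  ∀ (T : Type u) [Ring T] (g h : S →+* T), g.comp f = h.comp f → g = h

namespace RingHom.IsRingEpi

variable {R S : Type u} [Ring R] [Ring S] {f : R →+* S}

theorem commute_of_commute_comp (hf : f.IsRingEpi) {A : Type u} [Ring A] (g : S →+* A)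
    {a : A} (ha : IsUnit a) (hcomm : ∀ r, Commute a (g (f r))) (s : S) : Commute a (g s) := by
  obtain ⟨u, rfl⟩ := ha
  let conj : A →+* A := MulSemiringAction.toRingHom (ConjAct Aˣ) A (ConjAct.toConjAct u)
  have conj_eq_iff (x : A) : conj x = x ↔ Commute (u : A) x := by
    change u * x * ↑u⁻¹ = x ↔ _
    rw [Units.mul_inv_eq_iff_eq_mul]
    rfl
  have hconj : conj.comp g = g :=
    hf A _ _ (RingHom.ext fun r => (conj_eq_iff _).2 (hcomm r))
  exact (conj_eq_iff _).1 (RingHom.congr_fun hconj s)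

theorem map_smul_of_map_smul_comp (hf : f.IsRingEpi) {M N : Type u} [AddCommGroup M]
    [Module S M] [AddCommGroup N] [Module S N] (φ : M →+ N)
    (hφ : ∀ (r : R) (m : M), φ (f r • m) = f r • φ m) (s : S) (m : M) :
    φ (s • m) = s • φ m := by
  let n : Module.End ℤ (M × N) :=
    LinearMap.inr ℤ M N ∘ₗ φ.toIntLinearMap ∘ₗ LinearMap.fst ℤ M N
  have commute_iff_map_smul (s : S) :
      Commute (1 + n) (Module.toModuleEnd ℤ (M × N) s) ↔ ∀ m : M, φ (s • m) = s • φ m := by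
    rw [Commute, SemiconjBy, add_mul, mul_add, one_mul, mul_one, add_right_inj]
    constructor
    · intro h m
      simpa [n] using LinearMap.congr_fun h (m, 0)
    · intro h
      ext p <;> simp [n, h]
  have hn : IsUnit (1 + n) := IsNilpotent.isUnit_one_add ⟨2, by ext <;> simp [n, pow_two]⟩
  exact (commute_iff_map_smul s).1
    (hf.commute_of_commute_comp _ hn (fun r => (commute_iff_map_smul (f r)).2 (hφ r)) s) m

end RingHom.IsRingEpi

namespace ModuleCat

variable {R S : Type u} [Ring R] [Ring S] {f : R →+* S}

theorem restrictScalars_full_of_isRingEpi (hf : f.IsRingEpi) : (restrictScalars.{u} f).Full where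
  map_surjective {_ _} φ :=
    ⟨ofHom
      { toFun := φ
        map_add' := φ.hom.map_add
        map_smul' := hf.map_smul_of_map_smul_comp φ.hom.toAddMonoidHom φ.hom.map_smul },
      rfl⟩

theorem isRingEpi_of_restrictScalars_full [(restrictScalars.{u} f).Full] : f.IsRingEpi := by
  intro T _ g h hgh
  let Mg : ModuleCat.{u} S := (restrictScalars g).obj (of T T)
  let Mh : ModuleCat.{u} S := (restrictScalars h).obj (of T T)
  let e : (restrictScalars f).obj Mg ⟶ (restrictScalars f).obj Mh :=
    ofHom (X := (restrictScalars f).obj Mg) (Y := (restrictScalars f).obj Mh)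
      { toFun := fun t : T => t
        map_add' := fun _ _ => rfl
        map_smul' := fun r (t : T) => congrArg (· * t) (RingHom.congr_fun hgh r) }
  let ψ : T → T := (restrictScalars f).preimage e
  have hψ (t : T) : ψ t = t :=
    LinearMap.congr_fun (congrArg Hom.hom ((restrictScalars f).map_preimage e)) t
  ext s
  have hψ_smul : ψ (g s * 1) = h s * ψ 1 :=
    ((restrictScalars f).preimage e).hom.map_smul s (1 : T)
  simpa [hψ] using hψ_smul

end ModuleCat

/-- The forgetful (restriction of scalars) functor from left `S`-modules to left
`R`-modules is fully faithful if and only if `f` is an epimorphism of rings. -/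
theorem restrictScalars_full_faithful_iff_ringEpi
    {R S : Type u} [Ring R] [Ring S] (f : R →+* S) :
    ((ModuleCat.restrictScalars.{u} f).Full ∧ (ModuleCat.restrictScalars.{u} f).Faithful)
      ↔ f.IsRingEpi :=
  ⟨fun ⟨_, _⟩ => ModuleCat.isRingEpi_of_restrictScalars_full,
    fun hf => ⟨ModuleCat.restrictScalars_full_of_isRingEpi hf, inferInstance⟩⟩
end

section
/- Let R and S be topological rings in which open right ideals form a base of neighborhoods of zero, and let f : R → S be a ring homomorphism. Then f is continuous if and only if every right S-module on which every element has open annihilator (a discrete right S-module) is also, via restriction of scalars along f, a right R-module on which every element has open annihilator. -/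
universe u

open MulOpposite

/-- A topological ring is right linear if its open right ideals form a base of
neighborhoods of zero. -/
def IsRightLinearTopology (R : Type u) [Ring R] [TopologicalSpace R] : Prop :=
  ∀ U ∈ nhds (0 : R), ∃ I : Submodule Rᵐᵒᵖ R, IsOpen (I : Set R) ∧ (I : Set R) ⊆ U

/-- A right module over a topological ring is discrete if the annihilator of every
element is open. -/
def IsDiscreteModule (S : Type u) [Ring S] [TopologicalSpace S] (N : Type u)
    [AddCommGroup N] [Module Sᵐᵒᵖ N] : Prop :=
  ∀ y : N, IsOpen {s : S | op s • y = 0}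

/-! The quotients `S ⧸ I` by open right ideals are discrete, and the annihilator of the class of
`1` pulled back along `f` is `f ⁻¹' I`. So the restriction condition makes the preimages of open
right ideals open, which for a right linear `S` is continuity of `f` at `0`. -/

theorem setOf_op_smul_quotient_mk_eq_zero {S : Type u} [Ring S] (I : Submodule Sᵐᵒᵖ S) (s : S) :
    {t : S | op t • Submodule.Quotient.mk (p := I) s = 0} = (s * ·) ⁻¹' (I : Set S) := by
  ext t
  simp [← Submodule.Quotient.mk_smul, Submodule.Quotient.mk_eq_zero, smul_eq_mul_unop]

theorem isDiscreteModule_quotient {S : Type u} [Ring S] [TopologicalSpace S] [ContinuousMul S]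
    {I : Submodule Sᵐᵒᵖ S} (hI : IsOpen (I : Set S)) : IsDiscreteModule S (S ⧸ I) := by
  intro y
  obtain ⟨s, rfl⟩ := Submodule.Quotient.mk_surjective I y
  rw [setOf_op_smul_quotient_mk_eq_zero]
  exact hI.preimage (continuous_const_mul s)

theorem continuous_of_isOpen_preimage_rightIdeal {R : Type*} {S : Type u} [AddGroup R] [Ring S]
    [TopologicalSpace R] [TopologicalSpace S] [IsTopologicalAddGroup R] [IsTopologicalAddGroup S]
    (hS : IsRightLinearTopology S) (f : R →+ S)
    (hf : ∀ I : Submodule Sᵐᵒᵖ S, IsOpen (I : Set S) → IsOpen (f ⁻¹' I)) : Continuous f := by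
  refine continuous_of_continuousAt_zero f fun U hU => ?_
  rw [map_zero] at hU
  obtain ⟨I, hIopen, hIU⟩ := hS U hU
  have hzero : (0 : R) ∈ f ⁻¹' I := by simp
  exact Filter.mem_of_superset ((hf I hIopen).mem_nhds hzero) fun _ hr => hIU hr

theorem continuous_iff_discrete_restriction_general
    {R S : Type u} [Ring R] [Ring S] [TopologicalSpace R] [TopologicalSpace S]
    [IsTopologicalRing R] [IsTopologicalRing S]
    (hS : IsRightLinearTopology S) (f : R →+* S) :
    Continuous f ↔
      ∀ (N : Type u) [AddCommGroup N] [Module Sᵐᵒᵖ N], IsDiscreteModule S N →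
        ∀ y : N, IsOpen {r : R | op (f r) • y = 0} := by
  constructor
  · intro hf N _ _ hN y
    exact (hN y).preimage hf
  · intro h
    refine continuous_of_isOpen_preimage_rightIdeal hS f.toAddMonoidHom fun I hI => ?_
    have hann : IsOpen (f ⁻¹' {t | op t • Submodule.Quotient.mk (p := I) 1 = 0}) :=
      h (S ⧸ I) (isDiscreteModule_quotient hI) (Submodule.Quotient.mk 1)
    simpa [setOf_op_smul_quotient_mk_eq_zero] using hann

/-- Let `R` and `S` be right linear topological rings and `f : R → S` a ring
homomorphism.  Then `f` is continuous if and only if every discrete right `S`-module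
becomes, via restriction of scalars along `f`, a right `R`-module in which every
element has open annihilator. -/
theorem continuous_iff_discrete_restriction
    {R S : Type u} [Ring R] [Ring S] [TopologicalSpace R] [TopologicalSpace S]
    [IsTopologicalRing R] [IsTopologicalRing S]
    (hR : IsRightLinearTopology R) (hS : IsRightLinearTopology S) (f : R →+* S) :
    Continuous f ↔
      ∀ (N : Type u) [AddCommGroup N] [Module Sᵐᵒᵖ N], IsDiscreteModule S N →
        ∀ y : N, IsOpen {r : R | op (f r) • y = 0} :=
  continuous_iff_discrete_restriction_general hS f
end

section
/- Let R and S be right linear topological rings and f : R → S a ring homomorphism. If for every open right ideal I ⊆ R the closure of the right ideal f(I)·S in S is an open right ideal of S, then every separated topological right S-module which becomes a topological R-module when endowed with the discrete topology also becomes a topological S-module when endowed with the discrete topology. -/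
universe u

open MulOpposite

/-!
For a discrete module `N`, continuity of the action `N × S → N` means that the annihilator of
every `n : N` is an open right ideal of `S`. This annihilator is closed because `N` is separated,
and its preimage in `R` is a neighbourhood of `0` because `N` is a discrete `R`-module, so it
contains `f(I)` for some open right ideal `I` of `R`. Hence it contains the closure of `f(I)·S`,
which is open by tautness.
-/

open Topology

theorem AddMonoidHom.continuous_of_ker_mem_nhds_zero {G H : Type*} [AddGroup G]
    [TopologicalSpace G] [IsTopologicalAddGroup G] [AddGroup H] [TopologicalSpace H]
    [DiscreteTopology H] (φ : G →+ H) (h : (φ.ker : Set G) ∈ 𝓝 0) : Continuous φ := by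
  apply continuous_of_continuousAt_zero φ
  rwa [ContinuousAt, nhds_discrete H, map_zero, Filter.tendsto_pure]

def RingHom.IsTaut {R S : Type*} [Ring R] [Ring S] [TopologicalSpace R] [TopologicalSpace S]
    (f : R →+* S) : Prop :=
  ∀ I : Submodule Rᵐᵒᵖ R, IsOpen (I : Set R) →
    IsOpen (closure (Submodule.span Sᵐᵒᵖ (⇑f '' (I : Set R)) : Set S))

theorem RingHom.IsTaut.mem_nhds_zero_of_preimage_mem_nhds_zero {R S : Type*} [Ring R] [Ring S]
    [TopologicalSpace R] [TopologicalSpace S] {f : R →+* S} (hf : f.IsTaut)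
    (hR : IsRightLinearTopology R) {J : Submodule Sᵐᵒᵖ S} (hJ : IsClosed (J : Set S))
    (hfJ : f ⁻¹' J ∈ 𝓝 0) : (J : Set S) ∈ 𝓝 0 := by
  obtain ⟨I, hI, hIJ⟩ := hR _ hfJ
  have hspan : Submodule.span Sᵐᵒᵖ (f '' I) ≤ J :=
    Submodule.span_le.mpr (Set.image_subset_iff.mpr hIJ)
  refine Filter.mem_of_superset ((hf I hI).mem_nhds ?_) (closure_minimal hspan hJ)
  exact subset_closure (Submodule.zero_mem _)

/-- Its kernel is the right annihilator of `n`. -/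
def rightOrbitMap {S N : Type*} [Ring S] [AddCommGroup N] [Module Sᵐᵒᵖ N] (n : N) :
    S →ₗ[Sᵐᵒᵖ] N where
  toFun s := op s • n
  map_add' a b := by rw [op_add, add_smul]
  map_smul' c s := by
    induction c using MulOpposite.rec' with
    | h t => exact (op_mul s t).symm ▸ mul_smul (op t) (op s) n

theorem taut_discrete_R_module_is_discrete_S_module_general
    {R S : Type u} [Ring R] [Ring S] [TopologicalSpace R] [TopologicalSpace S]
    [IsTopologicalRing S]
    (hR : IsRightLinearTopology R) (f : R →+* S)
    (htaut : ∀ I : Submodule Rᵐᵒᵖ R, IsOpen (I : Set R) →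
      IsOpen (closure (Submodule.span Sᵐᵒᵖ (⇑f '' (I : Set R)) : Set S)))
    (N : Type u) [AddCommGroup N] [Module Sᵐᵒᵖ N] (τ : TopologicalSpace N)
    -- `N` is a separated topological right `S`-module:
    (hsep : @T2Space N τ)
    (hcontS : @Continuous (N × S) N (@instTopologicalSpaceProd N S τ _) τ
      (fun p => op p.2 • p.1))
    -- endowed with the discrete topology, `N` is a topological right `R`-module:
    (hdiscR : @Continuous (N × R) N (@instTopologicalSpaceProd N R ⊥ _) ⊥
      (fun p => op (f p.2) • p.1)) :
    -- endowed with the discrete topology, `N` is a topological right `S`-module: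
    @Continuous (N × S) N (@instTopologicalSpaceProd N S ⊥ _) ⊥
      (fun p => op p.2 • p.1) := by
  have hclosed (n : N) : IsClosed (LinearMap.ker (rightOrbitMap (S := S) n) : Set S) :=
    isClosed_singleton.preimage (hcontS.comp (continuous_const.prodMk continuous_id))
  clear hsep hcontS τ
  let _ : TopologicalSpace N := ⊥
  have _ : DiscreteTopology N := ⟨rfl⟩
  refine continuous_prod_of_discrete_left.mpr fun n => ?_
  have hfker : f ⁻¹' (LinearMap.ker (rightOrbitMap (S := S) n) : Set S) ∈ 𝓝 0 :=
    ((isOpen_discrete {0}).preimage (continuous_prod_of_discrete_left.mp hdiscR n)).mem_nhds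
      (x := 0) (by simp)
  exact (rightOrbitMap (S := S) n).toAddMonoidHom.continuous_of_ker_mem_nhds_zero
    (RingHom.IsTaut.mem_nhds_zero_of_preimage_mem_nhds_zero htaut hR (hclosed n) hfker)

/-- Let `R` and `S` be right linear topological rings and `f : R → S` a ring map
such that for every open right ideal `I ⊆ R` the closure of the right ideal
`f(I)·S` is an open right ideal of `S` (tautness).  Then every separated
topological right `S`-module which becomes a topological `R`-module when endowed
with the discrete topology also becomes a topological `S`-module when endowed
with the discrete topology. -/
theorem taut_discrete_R_module_is_discrete_S_module
    {R S : Type u} [Ring R] [Ring S] [TopologicalSpace R] [TopologicalSpace S]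
    [IsTopologicalRing R] [IsTopologicalRing S]
    (hR : IsRightLinearTopology R) (hS : IsRightLinearTopology S) (f : R →+* S)
    (htaut : ∀ I : Submodule Rᵐᵒᵖ R, IsOpen (I : Set R) →
      IsOpen (closure (Submodule.span Sᵐᵒᵖ (⇑f '' (I : Set R)) : Set S)))
    (N : Type u) [AddCommGroup N] [Module Sᵐᵒᵖ N] (τ : TopologicalSpace N)
    -- `N` is a separated topological right `S`-module:
    (hsep : @T2Space N τ)
    (hcontS : @Continuous (N × S) N (@instTopologicalSpaceProd N S τ _) τ
      (fun p => op p.2 • p.1))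
    -- endowed with the discrete topology, `N` is a topological right `R`-module:
    (hdiscR : @Continuous (N × R) N (@instTopologicalSpaceProd N R ⊥ _) ⊥
      (fun p => op (f p.2) • p.1)) :
    -- endowed with the discrete topology, `N` is a topological right `S`-module:
    @Continuous (N × S) N (@instTopologicalSpaceProd N S ⊥ _) ⊥
      (fun p => op p.2 • p.1) :=
  taut_discrete_R_module_is_discrete_S_module_general hR f htaut N τ hsep hcontS hdiscR
end

section
/- Let R and S be right linear topological rings and f : R → S a continuous ring homomorphism that is taut (for every open right ideal I ⊆ R, the closure J of f(I)·S in S is an open right ideal of S). Then the collection of such closures J, as I ranges over all open right ideals of R, forms a base of neighborhoods of zero in S. -/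
universe u

open MulOpposite

theorem IsRightLinearTopology.exists_span_image_le {R : Type u} {S : Type*} [Ring R] [Ring S]
    [TopologicalSpace R] [TopologicalSpace S] (hR : IsRightLinearTopology R) {f : R →+* S}
    (hf : Continuous f) {J : Submodule Sᵐᵒᵖ S} (hJ : IsOpen (J : Set S)) :
    ∃ I : Submodule Rᵐᵒᵖ R, IsOpen (I : Set R) ∧ Submodule.span Sᵐᵒᵖ (f '' I) ≤ J := by
  have hpre : f ⁻¹' J ∈ nhds (0 : R) :=
    hf.continuousAt.preimage_mem_nhds (by simpa using hJ.mem_nhds J.zero_mem)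
  obtain ⟨I, hI, hIJ⟩ := hR _ hpre
  exact ⟨I, hI, Submodule.span_le.mpr (Set.image_subset_iff.mpr hIJ)⟩

theorem Submodule.closure_subset_of_le_of_isOpen {A M : Type*} [Ring A] [AddCommGroup M]
    [Module A M] [TopologicalSpace M] [SeparatelyContinuousAdd M] {N J : Submodule A M}
    (hNJ : N ≤ J) (hJ : IsOpen (J : Set M)) : closure (N : Set M) ⊆ J :=
  closure_minimal hNJ (AddSubgroup.isClosed_of_isOpen J.toAddSubgroup hJ)

theorem taut_closures_form_base_general
    {R S : Type u} [Ring R] [Ring S] [TopologicalSpace R] [TopologicalSpace S]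
    [IsTopologicalRing S]
    (hR : IsRightLinearTopology R) (hS : IsRightLinearTopology S) (f : R →+* S)
    (hcont : Continuous f) :
    ∀ V ∈ nhds (0 : S), ∃ I : Submodule Rᵐᵒᵖ R, IsOpen (I : Set R) ∧
      closure (Submodule.span Sᵐᵒᵖ (⇑f '' (I : Set R)) : Set S) ⊆ V := by
  intro V hV
  obtain ⟨J, hJ, hJV⟩ := hS V hV
  obtain ⟨I, hI, hIJ⟩ := hR.exists_span_image_le hcont hJ
  exact ⟨I, hI, (Submodule.closure_subset_of_le_of_isOpen hIJ hJ).trans hJV⟩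

/-- Let `f : R → S` be a continuous taut homomorphism of right linear topological
rings (taut: for every open right ideal `I ⊆ R` the closure `J` of `f(I)·S` is an
open right ideal of `S`).  Then the closures `J`, for `I` ranging over the open
right ideals of `R`, form a base of neighborhoods of zero in `S`. -/
theorem taut_closures_form_base
    {R S : Type u} [Ring R] [Ring S] [TopologicalSpace R] [TopologicalSpace S]
    [IsTopologicalRing R] [IsTopologicalRing S]
    (hR : IsRightLinearTopology R) (hS : IsRightLinearTopology S) (f : R →+* S)
    (hcont : Continuous f)
    (htaut : ∀ I : Submodule Rᵐᵒᵖ R, IsOpen (I : Set R) →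
      IsOpen (closure (Submodule.span Sᵐᵒᵖ (⇑f '' (I : Set R)) : Set S))) :
    ∀ V ∈ nhds (0 : S), ∃ I : Submodule Rᵐᵒᵖ R, IsOpen (I : Set R) ∧
      closure (Submodule.span Sᵐᵒᵖ (⇑f '' (I : Set R)) : Set S) ⊆ V :=
  taut_closures_form_base_general hR hS f hcont
end

section
/- Let R and S be right linear topological rings, f : R → S a ring homomorphism, and let I'' ⊆ I' ⊆ R be open two-sided ideals of R such that the closure J' of f(I')·S and the closure J'' of f(I'')·S are both open two-sided ideals of S. Set R' = R/I', R'' = R/I'', S' = S/J', S'' = S/J''. Then the induced map R' ⊗_{R''} S'' → S' (of R'-S''-bimodules) is an isomorphism. -/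
/-! A balanced biadditive `β : R' → S'' → W` yields the additive map `g s = β 1 (q'' s)` on `S`,
and balancedness turns `g (f r * t)` into `β (p' r) (q'' t)`. Hence `g` kills the right ideal
`f(I')·S`; it also kills the open subgroup `J''`, so its kernel is an open, hence closed, subgroup
and contains `J'`, the closure of `f(I')·S`. Thus `g` factors through `S' = S/J'`, and the
factorization is the required map; it is unique since `q' s = f' 1 * σ (q'' s)`. -/

universe u

open MulOpposite

/-- `μ : X → Y → Z` exhibits `Z` as the tensor product `X ⊗_A Y` of the right
`A`-module `X` and the left `A`-module `Y` over a (possibly noncommutative) ring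
`A`: `μ` is biadditive, `A`-balanced, and universal among such pairings.  In
particular, for a biadditive balanced pairing `μ`, `IsTensorProd A μ` says exactly
that the induced additive map `X ⊗_A Y → Z` is an isomorphism. -/
def IsTensorProd (A : Type u) [Ring A] {X Y Z : Type u} [AddCommGroup X] [AddCommGroup Y]
    [AddCommGroup Z] [Module Aᵐᵒᵖ X] [Module A Y] (μ : X → Y → Z) : Prop :=
  (∀ x₁ x₂ y, μ (x₁ + x₂) y = μ x₁ y + μ x₂ y) ∧
  (∀ x y₁ y₂, μ x (y₁ + y₂) = μ x y₁ + μ x y₂) ∧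
  (∀ (x : X) (a : A) (y : Y), μ (MulOpposite.op a • x) y = μ x (a • y)) ∧
  ∀ (W : Type u) [AddCommGroup W] (β : X → Y → W),
    (∀ x₁ x₂ y, β (x₁ + x₂) y = β x₁ y + β x₂ y) →
    (∀ x y₁ y₂, β x (y₁ + y₂) = β x y₁ + β x y₂) →
    (∀ (x : X) (a : A) (y : Y), β (MulOpposite.op a • x) y = β x (a • y)) →
    ∃! ψ : Z →+ W, ∀ x y, ψ (μ x y) = β x y

theorem closure_span_mulOpposite_subset_ker {S W : Type*} [Ring S] [TopologicalSpace S]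
    [SeparatelyContinuousAdd S] [AddCommGroup W] (g : S →+ W) (hg : IsOpen (g.ker : Set S))
    {X : Set S} (hX : ∀ x ∈ X, ∀ t, g (x * t) = 0) :
    closure (Submodule.span Sᵐᵒᵖ X : Set S) ⊆ g.ker := by
  refine closure_minimal (fun s hs => ?_) (g.ker.isClosed_of_isOpen hg)
  suffices ∀ t, g (s * t) = 0 by simpa using this 1
  induction hs using Submodule.span_induction with
  | mem x hx => exact hX x hx
  | zero => simp
  | add s₁ s₂ _ _ h₁ h₂ => simp [add_mul, h₁, h₂]
  | smul a s _ h => simp [MulOpposite.smul_eq_mul_unop, mul_assoc, h]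

section QuotientPairing

variable {R S R' R'' S' S'' : Type*} [Ring R] [Ring S] [Ring R'] [Ring R''] [Ring S'] [Ring S'']
  {f : R →+* S} {p' : R →+* R'} {p'' : R →+* R''} {q' : S →+* S'}
  {q'' : S →+* S''} {π : R'' →+* R'} {σ : S'' →+* S'} {f' : R' →+* S'} {f'' : R'' →+* S''}

theorem induced_comp_eq (hp'' : Function.Surjective p'') (hπ : π.comp p'' = p')
    (hσ : σ.comp q'' = q') (hf' : f'.comp p' = q'.comp f) (hf'' : f''.comp p'' = q''.comp f) :
    f'.comp π = σ.comp f'' :=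
  (RingHom.cancel_right hp'').mp <| by
    rw [RingHom.comp_assoc, hπ, hf', RingHom.comp_assoc, hf'', ← RingHom.comp_assoc, hσ]

theorem quotient_mul_eq (hσ : σ.comp q'' = q') (hf' : f'.comp p' = q'.comp f) (r : R) (s : S) :
    q' (f r * s) = f' (p' r) * σ (q'' s) := by
  rw [map_mul, ← RingHom.comp_apply q' f, ← hf', ← hσ, RingHom.comp_apply, RingHom.comp_apply]

theorem balanced_one_quotient_mul (hπ : π.comp p'' = p') (hf'' : f''.comp p'' = q''.comp f)
    {W : Type*} {β : R' → S'' → W} (hbal : ∀ x c y, β (x * π c) y = β x (f'' c * y))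
    (r : R) (t : S) :
    β 1 (q'' (f r * t)) = β (p' r) (q'' t) := by
  rw [← hπ, RingHom.comp_apply, ← one_mul (π (p'' r)), hbal, map_mul, ← RingHom.comp_apply f'',
    hf'', RingHom.comp_apply]

theorem balanced_one_eq_zero_of_quotient_eq_zero [TopologicalSpace S] [SeparatelyContinuousAdd S]
    (hJ' : (⇑q' ⁻¹' {0} : Set S)
      = closure (Submodule.span Sᵐᵒᵖ (⇑f '' (⇑p' ⁻¹' {0})) : Set S))
    (hJ''open : IsOpen (⇑q'' ⁻¹' {0} : Set S))
    (hπ : π.comp p'' = p') (hf'' : f''.comp p'' = q''.comp f) {W : Type*} [AddCommGroup W]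
    {β : R' → S'' → W}
    (hadd₁ : ∀ x₁ x₂ y, β (x₁ + x₂) y = β x₁ y + β x₂ y)
    (hadd₂ : ∀ x y₁ y₂, β x (y₁ + y₂) = β x y₁ + β x y₂)
    (hbal : ∀ x c y, β (x * π c) y = β x (f'' c * y)) {s : S} (hs : q' s = 0) :
    β 1 (q'' s) = 0 := by
  let g : S →+ W := (AddMonoidHom.mk' (β 1) (hadd₂ 1)).comp q''.toAddMonoidHom
  have hβ_zero_left : ∀ y, β 0 y = 0 := fun y => (AddMonoidHom.mk' (β · y) (hadd₁ · · y)).map_zero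
  have hβ_zero_right : ∀ x, β x 0 = 0 := fun x => (AddMonoidHom.mk' (β x) (hadd₂ x)).map_zero
  have hker_open : IsOpen (g.ker : Set S) := by
    refine AddSubgroup.isOpen_mono (H₁ := q''.toAddMonoidHom.ker) (fun s hs => ?_) hJ''open
    change β 1 (q'' s) = 0
    rw [show q'' s = 0 from hs, hβ_zero_right]
  refine closure_span_mulOpposite_subset_ker g hker_open ?_ (hJ'.subset hs)
  rintro _ ⟨r, hr, rfl⟩ t
  change β 1 (q'' (f r * t)) = 0
  rw [balanced_one_quotient_mul hπ hf'' hbal, show p' r = 0 from hr, hβ_zero_left]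

theorem map_pairing_eq_iff (hp' : Function.Surjective p') (hq'' : Function.Surjective q'')
    (hπ : π.comp p'' = p') (hσ : σ.comp q'' = q') (hf' : f'.comp p' = q'.comp f)
    (hf'' : f''.comp p'' = q''.comp f) {W : Type*} [AddCommGroup W]
    {β : R' → S'' → W}
    (hbal : ∀ x c y, β (x * π c) y = β x (f'' c * y)) (ψ : S' →+ W) :
    (∀ x y, ψ (f' x * σ y) = β x y) ↔ ∀ s, ψ (q' s) = β 1 (q'' s) := by
  refine ⟨fun h s => ?_, fun h x y => ?_⟩
  · rw [← h, ← map_one p', ← quotient_mul_eq hσ hf', map_one, one_mul]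
  · obtain ⟨r, rfl⟩ := hp' x
    obtain ⟨s, rfl⟩ := hq'' y
    rw [← quotient_mul_eq hσ hf', h, balanced_one_quotient_mul hπ hf'' hbal]

end QuotientPairing

theorem quotients_tensor_iso_general
    {R S : Type u} [Ring R] [Ring S] [TopologicalSpace S]
    [IsTopologicalRing S] (f : R →+* S)
    (R' R'' S' S'' : Type u) [Ring R'] [Ring R''] [Ring S'] [Ring S'']
    (p' : R →+* R') (p'' : R →+* R'') (q' : S →+* S') (q'' : S →+* S'')
    (hp' : Function.Surjective p') (hp'' : Function.Surjective p'')
    (hq' : Function.Surjective q') (hq'' : Function.Surjective q'')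
    (hJ' : (⇑q' ⁻¹' {0} : Set S)
      = closure (Submodule.span Sᵐᵒᵖ (⇑f '' (⇑p' ⁻¹' {0})) : Set S))
    (hJ''open : IsOpen (⇑q'' ⁻¹' {0} : Set S))
    (π : R'' →+* R') (hπ : π.comp p'' = p')
    (σ : S'' →+* S') (hσ : σ.comp q'' = q')
    (f' : R' →+* S') (hf' : f'.comp p' = q'.comp f)
    (f'' : R'' →+* S'') (hf'' : f''.comp p'' = q''.comp f) :
    letI : Module R'' S'' := Module.compHom S'' f''
    letI : Module R''ᵐᵒᵖ R' := Module.compHom R' (RingHom.op π)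
    IsTensorProd R'' (fun (a : R') (b : S'') => f' a * σ b) := by
  refine ⟨fun _ _ _ => by simp only [map_add, add_mul], fun _ _ _ => by simp only [map_add, mul_add],
    fun x c y => ?_, fun W _ β hadd₁ hadd₂ hbal => ?_⟩
  · change f' (x * π c) * σ y = f' x * σ (f'' c * y)
    rw [map_mul, map_mul, ← RingHom.comp_apply f' π, induced_comp_eq hp'' hπ hσ hf' hf'',
      RingHom.comp_apply, mul_assoc]
  · let g : S →+ W := (AddMonoidHom.mk' (β 1) (hadd₂ 1)).comp q''.toAddMonoidHom
    have hker : q'.toAddMonoidHom.ker ≤ g.ker := fun s hs =>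
      balanced_one_eq_zero_of_quotient_eq_zero hJ' hJ''open hπ hf'' hadd₁ hadd₂ hbal hs
    have hpairing := map_pairing_eq_iff hp' hq'' hπ hσ hf' hf'' hbal
    refine ⟨q'.toAddMonoidHom.liftOfSurjective hq' ⟨g, hker⟩, (hpairing _).mpr fun s =>
      AddMonoidHom.liftOfRightInverse_comp_apply _ _ _ _ s, fun ψ hψ => ?_⟩
    exact AddMonoidHom.eq_liftOfRightInverse _ _ _ g hker ψ (AddMonoidHom.ext ((hpairing ψ).mp hψ))

/-- Let `f : R → S` be a map of right linear topological rings, `I'' ⊆ I' ⊆ R`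
open two-sided ideals such that the closures `J'` of `f(I')·S` and `J''` of
`f(I'')·S` are open two-sided ideals of `S`.  With `R' = R/I'`, `R'' = R/I''`,
`S' = S/J'`, `S'' = S/J''` (presented by surjective ring homomorphisms with the
prescribed kernels) and the induced maps `π : R'' → R'`, `σ : S'' → S'`,
`f' : R' → S'`, `f'' : R'' → S''`, the induced map `R' ⊗_{R''} S'' → S'`,
`a ⊗ b ↦ f'(a)·σ(b)`, is an isomorphism. -/
theorem quotients_tensor_iso
    {R S : Type u} [Ring R] [Ring S] [TopologicalSpace R] [TopologicalSpace S]
    [IsTopologicalRing R] [IsTopologicalRing S] (f : R →+* S)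
    (R' R'' S' S'' : Type u) [Ring R'] [Ring R''] [Ring S'] [Ring S'']
    (p' : R →+* R') (p'' : R →+* R'') (q' : S →+* S') (q'' : S →+* S'')
    (hp' : Function.Surjective p') (hp'' : Function.Surjective p'')
    (hq' : Function.Surjective q') (hq'' : Function.Surjective q'')
    (hI'open : IsOpen (⇑p' ⁻¹' {0})) (hI''open : IsOpen (⇑p'' ⁻¹' {0}))
    (hII : (⇑p'' ⁻¹' {0} : Set R) ⊆ ⇑p' ⁻¹' {0})
    (hJ' : (⇑q' ⁻¹' {0} : Set S)
      = closure (Submodule.span Sᵐᵒᵖ (⇑f '' (⇑p' ⁻¹' {0})) : Set S))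
    (hJ'' : (⇑q'' ⁻¹' {0} : Set S)
      = closure (Submodule.span Sᵐᵒᵖ (⇑f '' (⇑p'' ⁻¹' {0})) : Set S))
    (hJ'open : IsOpen (⇑q' ⁻¹' {0} : Set S)) (hJ''open : IsOpen (⇑q'' ⁻¹' {0} : Set S))
    (π : R'' →+* R') (hπ : π.comp p'' = p')
    (σ : S'' →+* S') (hσ : σ.comp q'' = q')
    (f' : R' →+* S') (hf' : f'.comp p' = q'.comp f)
    (f'' : R'' →+* S'') (hf'' : f''.comp p'' = q''.comp f) :
    letI : Module R'' S'' := Module.compHom S'' f''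
    letI : Module R''ᵐᵒᵖ R' := Module.compHom R' (RingHom.op π)
    IsTensorProd R'' (fun (a : R') (b : S'') => f' a * σ b) :=
  quotients_tensor_iso_general f R' R'' S' S'' p' p'' q' q'' hp' hp'' hq' hq'' hJ' hJ''open π hπ σ
    hσ f' hf' f'' hf''
end

section
/- Let R and S be two-sided linear topological rings whose topologies have bases of open two-sided ideals, and let f : R → S be a ring homomorphism. Suppose given descending chains of open two-sided ideals I_1 ⊇ I_2 ⊇ ⋯ in R and J_1 ⊇ J_2 ⊇ ⋯ in S, each forming a base of neighborhoods of zero, with f(I_n) ⊆ J_n, and such that for each n ≥ 1 the induced map R_n ⊗_{R_{n+1}} S_{n+1} → S_n is an isomorphism, where R_n = R/I_n and S_n = S/J_n. Then for each n, J_n equals the closure of the right ideal f(I_n)·S in S. -/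
/-!
Since `R_n = R_{n+1} / (I_n / I_{n+1})`, the tensor product `R_n ⊗_{R_{n+1}} S_{n+1}` is
`S_{n+1}` modulo the image of `f(I_n)·S`; so the isomorphism with `S_n` says
`J_n ⊆ f(I_n)·S + J_{n+1}`, and by iteration `J_n ⊆ f(I_n)·S + J_m` for all `m ≥ n`. As the
`J_m` form a base of neighbourhoods of `0`, `J_n` lies in the closure of `f(I_n)·S`; conversely
`J_n` is an open, hence closed, subgroup containing `f(I_n)·S`.
-/

universe u

open MulOpposite

open Topology

theorem IsTensorProd.mem_of_apply_one_eq_zero {A X M Z : Type u} [Ring A] [Ring X]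
    [AddCommGroup M] [Module A M] [AddCommGroup Z] {π : A →+* X} (hπ : Function.Surjective π)
    {μ : X → M → Z}
    (hμ : letI : Module Aᵐᵒᵖ X := Module.compHom _ π.op; IsTensorProd A μ)
    {T : AddSubgroup M} (hT : ∀ (a : A) (m : M), π a = 0 → a • m ∈ T) {m : M} (hm : μ 1 m = 0) :
    m ∈ T := by
  let _ : Module Aᵐᵒᵖ X := Module.compHom _ π.op
  obtain ⟨-, -, -, huniv⟩ := hμ
  choose L hL using hπ
  have lift_congr : ∀ (a b : A) (m : M), π a = π b → ((a • m : M) : M ⧸ T) = (b • m : M) :=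
    fun a b m h => (QuotientAddGroup.eq_iff_sub_mem).2 <| by
      rw [← sub_smul]; exact hT _ _ (by rw [map_sub, h, sub_self])
  -- `(x, m) ↦ [L x • m]` is a balanced pairing, so it factors through `μ`
  let β : X → M → M ⧸ T := fun x m => (L x • m : M)
  have β_add_left : ∀ x₁ x₂ m, β (x₁ + x₂) m = β x₁ m + β x₂ m := fun x₁ x₂ m => by
    simp only [β, ← QuotientAddGroup.mk_add, ← add_smul]
    exact lift_congr _ _ _ (by rw [map_add, hL, hL, hL])
  have β_add_right : ∀ x m₁ m₂, β x (m₁ + m₂) = β x m₁ + β x m₂ := fun x m₁ m₂ => by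
    simp only [β, smul_add, QuotientAddGroup.mk_add]
  have β_balanced : ∀ (x : X) (c : A) m, β (MulOpposite.op c • x) m = β x (c • m) :=
    fun x c m => by
      simp only [β, ← mul_smul]
      exact lift_congr _ _ _ (by rw [map_mul, hL, hL]; rfl)
  obtain ⟨ψ, hψ, -⟩ := huniv (M ⧸ T) β β_add_left β_add_right β_balanced
  have hβ : β 1 m = 0 := by rw [← hψ, hm, map_zero]
  rw [← QuotientAddGroup.eq_zero_iff, ← one_smul A m, lift_congr 1 (L 1) m (by rw [hL, map_one])]
  exact hβ

theorem antitone_ker_of_comp_eq {R : Type*} {Q : ℕ → Type*} [NonAssocRing R]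
    [∀ n, NonAssocSemiring (Q n)] (p : ∀ n, R →+* Q n) (π : ∀ n, Q (n + 1) →+* Q n)
    (h : ∀ n, (π n).comp (p (n + 1)) = p n) : Antitone fun n => (p n).toAddMonoidHom.ker :=
  antitone_nat_of_succ_le fun n x hx => by
    rw [AddMonoidHom.mem_ker] at hx ⊢
    rw [← h n]
    exact (congrArg (π n) hx).trans (map_zero _)

theorem RingHom.span_op_subset_ker {S T : Type*} [Ring S] [Ring T] (g : S →+* T) {t : Set S}
    (ht : t ⊆ g ⁻¹' {0}) : (Submodule.span Sᵐᵒᵖ t : Set S) ⊆ g ⁻¹' {0} := fun x hx => by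
  induction hx using Submodule.span_induction with
  | mem x hx => exact ht hx
  | zero => simp
  | add x y _ _ hx hy => simp_all
  | smul c x _ hx => simp_all [MulOpposite.smul_eq_mul_unop]

theorem le_sup_add_of_le_sup_succ {α : Type*} [SemilatticeSup α] {J N : ℕ → α}
    (hN : Antitone N) (h : ∀ n, J n ≤ N n ⊔ J (n + 1)) (n m : ℕ) : J n ≤ N n ⊔ J (n + m) := by
  induction m with
  | zero => exact le_sup_right
  | succ m ih =>
    calc J n ≤ N n ⊔ J (n + m) := ih
      _ ≤ N n ⊔ (N (n + m) ⊔ J (n + m + 1)) := sup_le_sup_left (h _) _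
      _ = N n ⊔ J (n + (m + 1)) := by
        rw [← sup_assoc, sup_eq_left.2 (hN (Nat.le_add_right n m))]; rfl

theorem mem_closure_of_forall_nhds_mem_sup {G : Type*} [AddCommGroup G]
    [TopologicalSpace G] [IsTopologicalAddGroup G] {N : AddSubgroup G} {x : G}
    (h : ∀ V ∈ 𝓝 (0 : G), ∃ H : AddSubgroup G, (H : Set G) ⊆ V ∧ x ∈ N ⊔ H) :
    x ∈ closure (N : Set G) := by
  rw [mem_closure_iff_nhds]
  intro U hU
  have hV : (x - ·) ⁻¹' U ∈ 𝓝 (0 : G) :=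
    (continuous_const.sub continuous_id).continuousAt.preimage_mem_nhds (by simpa using hU)
  obtain ⟨H, hHV, hx⟩ := h _ hV
  obtain ⟨y, hy, z, hz, rfl⟩ := AddSubgroup.mem_sup.1 hx
  exact ⟨y, by simpa using hHV hz, hy⟩

/-- `J_n ⊆ f(I_n)·S + J_{n+1}`, where `R₀, R₁, S₀, S₁` stand for `R_n, R_{n+1}, S_n, S_{n+1}`. -/
theorem ker_comp_le_span_sup_ker {R S R₀ R₁ S₀ S₁ : Type u} [Ring R] [Ring S] [Ring R₀]
    [Ring R₁] [Ring S₀] [Ring S₁] (f : R →+* S) {p : R →+* R₁} {q : S →+* S₁}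
    (hp : Function.Surjective p) (hq : Function.Surjective q) {πR : R₁ →+* R₀}
    (hπR : Function.Surjective πR) (πS : S₁ →+* S₀) (f₀ : R₀ →+* S₀) {f₁ : R₁ →+* S₁}
    (hf₁ : f₁.comp p = q.comp f)
    (htens : letI : Module R₁ S₁ := Module.compHom _ f₁
      letI : Module R₁ᵐᵒᵖ R₀ := Module.compHom _ πR.op
      IsTensorProd R₁ (fun (a : R₀) (b : S₁) => f₀ a * πS b)) :
    (πS.comp q).toAddMonoidHom.ker ≤
      (Submodule.span Sᵐᵒᵖ (f '' ((πR.comp p) ⁻¹' {0}))).toAddSubgroup ⊔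
        q.toAddMonoidHom.ker := by
  let _ : Module R₁ S₁ := Module.compHom _ f₁
  intro x hx
  rw [← AddSubgroup.comap_map_eq, AddSubgroup.mem_comap]
  refine IsTensorProd.mem_of_apply_one_eq_zero hπR htens ?_ (m := q x) ?_
  · intro a b ha
    obtain ⟨r, rfl⟩ := hp a
    obtain ⟨s, rfl⟩ := hq b
    have hr : f r ∈ Submodule.span Sᵐᵒᵖ (f '' ((πR.comp p) ⁻¹' {0})) :=
      Submodule.subset_span ⟨r, ha, rfl⟩
    refine ⟨f r * s, Submodule.smul_mem _ (MulOpposite.op s) hr, ?_⟩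
    show q (f r * s) = f₁ (p r) * q s
    rw [map_mul, ← RingHom.comp_apply f₁, hf₁, RingHom.comp_apply]
  · simpa using hx

theorem chains_tensor_iso_closure_general
    {R S : Type u} [Ring R] [Ring S] [TopologicalSpace S]
    [IsTopologicalRing S] (f : R →+* S)
    (Rq Sq : ℕ → Type u) [∀ n, Ring (Rq n)] [∀ n, Ring (Sq n)]
    (pR : ∀ n, R →+* Rq n) (qS : ∀ n, S →+* Sq n)
    (hpR : ∀ n, Function.Surjective (pR n)) (hqS : ∀ n, Function.Surjective (qS n))
    (πR : ∀ n, Rq (n + 1) →+* Rq n) (πS : ∀ n, Sq (n + 1) →+* Sq n)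
    (hπR : ∀ n, (πR n).comp (pR (n + 1)) = pR n)
    (hπS : ∀ n, (πS n).comp (qS (n + 1)) = qS n)
    (fq : ∀ n, Rq n →+* Sq n)
    (hfq : ∀ n, (fq n).comp (pR n) = (qS n).comp f)
    -- the ideals `I_n = ker (R → R_n)` and `J_n = ker (S → S_n)` are open
    (hJopen : ∀ n, IsOpen (⇑(qS n) ⁻¹' {0}))
    -- and form bases of neighborhoods of zero
    (hJbase : ∀ V ∈ nhds (0 : S), ∃ n, (⇑(qS n) ⁻¹' {0} : Set S) ⊆ V)
    -- `f(I_n) ⊆ J_n`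
    (hfIJ : ∀ n, ⇑f '' (⇑(pR n) ⁻¹' {0}) ⊆ ⇑(qS n) ⁻¹' {0})
    -- the induced maps `R_n ⊗_{R_{n+1}} S_{n+1} → S_n` are isomorphisms
    (htens : ∀ n,
      letI : Module (Rq (n + 1)) (Sq (n + 1)) := Module.compHom _ (fq (n + 1))
      letI : Module (Rq (n + 1))ᵐᵒᵖ (Rq n) := Module.compHom _ (RingHom.op (πR n))
      IsTensorProd (Rq (n + 1)) (fun (a : Rq n) (b : Sq (n + 1)) => fq n a * πS n b)) :
    ∀ n, (⇑(qS n) ⁻¹' {0} : Set S)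
      = closure (Submodule.span Sᵐᵒᵖ (⇑f '' (⇑(pR n) ⁻¹' {0})) : Set S) := by
  let J n := (qS n).toAddMonoidHom.ker
  let N n := (Submodule.span Sᵐᵒᵖ (⇑f '' (⇑(pR n) ⁻¹' {0}))).toAddSubgroup
  have hJanti : Antitone J := antitone_ker_of_comp_eq qS πS hπS
  have hNanti : Antitone N := fun _ _ hmn =>
    Submodule.span_mono (Set.image_mono (antitone_ker_of_comp_eq pR πR hπR hmn))
  have hπRsurj : ∀ n, Function.Surjective (πR n) := fun n =>
    .of_comp (g := pR (n + 1)) (by rw [← RingHom.coe_comp, hπR n]; exact hpR n)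
  have hstep : ∀ n, J n ≤ N n ⊔ J (n + 1) := fun n => by
    have := ker_comp_le_span_sup_ker f (hpR (n + 1)) (hqS (n + 1)) (hπRsurj n) (πS n) (fq n)
      (hfq (n + 1)) (htens n)
    rwa [hπR n, hπS n] at this
  intro n
  refine subset_antisymm (fun x hx => ?_) ?_
  · refine mem_closure_of_forall_nhds_mem_sup (N := N n) fun V hV => ?_
    obtain ⟨m, hm⟩ := hJbase V hV
    exact ⟨J (n + m), subset_trans (hJanti (Nat.le_add_left m n)) hm,
      le_sup_add_of_le_sup_succ hNanti hstep n m hx⟩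
  · exact closure_minimal ((qS n).span_op_subset_ker (hfIJ n))
      (AddSubgroup.isClosed_of_isOpen (J n) (hJopen n))

/-- Let `f : R → S` be a map of two-sided linear topological rings equipped with
descending chains of open two-sided ideals `I_n ⊆ R`, `J_n ⊆ S` forming bases of
neighborhoods of zero, with `f(I_n) ⊆ J_n` (the ideals are presented as the
kernels of surjective ring maps `R → R_n`, `S → S_n` onto the quotient rings,
with transition maps `R_{n+1} → R_n`, `S_{n+1} → S_n` and induced maps
`f_n : R_n → S_n`).  If for every `n` the induced map
`R_n ⊗_{R_{n+1}} S_{n+1} → S_n`, `a ⊗ b ↦ f_n(a)·π_n(b)`, is an isomorphism,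
then `J_n` is the closure of the right ideal `f(I_n)·S` in `S` for every `n`. -/
theorem chains_tensor_iso_closure
    {R S : Type u} [Ring R] [Ring S] [TopologicalSpace R] [TopologicalSpace S]
    [IsTopologicalRing R] [IsTopologicalRing S] (f : R →+* S)
    (Rq Sq : ℕ → Type u) [∀ n, Ring (Rq n)] [∀ n, Ring (Sq n)]
    (pR : ∀ n, R →+* Rq n) (qS : ∀ n, S →+* Sq n)
    (hpR : ∀ n, Function.Surjective (pR n)) (hqS : ∀ n, Function.Surjective (qS n))
    (πR : ∀ n, Rq (n + 1) →+* Rq n) (πS : ∀ n, Sq (n + 1) →+* Sq n)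
    (hπR : ∀ n, (πR n).comp (pR (n + 1)) = pR n)
    (hπS : ∀ n, (πS n).comp (qS (n + 1)) = qS n)
    (fq : ∀ n, Rq n →+* Sq n)
    (hfq : ∀ n, (fq n).comp (pR n) = (qS n).comp f)
    -- the ideals `I_n = ker (R → R_n)` and `J_n = ker (S → S_n)` are open
    (hIopen : ∀ n, IsOpen (⇑(pR n) ⁻¹' {0})) (hJopen : ∀ n, IsOpen (⇑(qS n) ⁻¹' {0}))
    -- and form bases of neighborhoods of zero
    (hIbase : ∀ U ∈ nhds (0 : R), ∃ n, (⇑(pR n) ⁻¹' {0} : Set R) ⊆ U)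
    (hJbase : ∀ V ∈ nhds (0 : S), ∃ n, (⇑(qS n) ⁻¹' {0} : Set S) ⊆ V)
    -- `f(I_n) ⊆ J_n`
    (hfIJ : ∀ n, ⇑f '' (⇑(pR n) ⁻¹' {0}) ⊆ ⇑(qS n) ⁻¹' {0})
    -- the induced maps `R_n ⊗_{R_{n+1}} S_{n+1} → S_n` are isomorphisms
    (htens : ∀ n,
      letI : Module (Rq (n + 1)) (Sq (n + 1)) := Module.compHom _ (fq (n + 1))
      letI : Module (Rq (n + 1))ᵐᵒᵖ (Rq n) := Module.compHom _ (RingHom.op (πR n))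
      IsTensorProd (Rq (n + 1)) (fun (a : Rq n) (b : Sq (n + 1)) => fq n a * πS n b)) :
    ∀ n, (⇑(qS n) ⁻¹' {0} : Set S)
      = closure (Submodule.span Sᵐᵒᵖ (⇑f '' (⇑(pR n) ⁻¹' {0})) : Set S) :=
  chains_tensor_iso_closure_general f Rq Sq pR qS hpR hqS πR πS hπR hπS fq hfq hJopen hJbase hfIJ
    htens
end

section
/- Let f : R → S be a continuous homomorphism of two-sided linear topological rings such that there exist bases of neighborhoods of zero {I_α} in R and {J_α} in S, consisting of open two-sided ideals indexed by the same directed poset, with f(I_α) ⊆ J_α, the induced quotient ring maps R/I_α → S/J_α being ring epimorphisms, and the families being decreasing along the poset order. Then for any open two-sided ideals I ⊆ R and J ⊆ S with f(I) ⊆ J, the induced map R/I → S/J is a ring epimorphism. -/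
universe u

/-!
Given open ideals `I ⊆ R` and `J ⊆ S`, directedness of the index poset yields one index `c` with
`I_c ⊆ I` and `J_c ⊆ J`. Then `R/I_c → R/I` and `S/J_c → S/J` are the induced surjections, and the
square they form with `g_c` and `R/I → S/J` commutes. Going around it, `R/I_c → S/J_c → S/J` is an
epimorphism (an epimorphism followed by a surjection), so it is also `R/I_c → R/I → S/J`, and
therefore `R/I → S/J` is an epimorphism.
-/

namespace RingHom.IsRingEpi

variable {A B C : Type u} [Ring A] [Ring B] [Ring C]

theorem of_surjective {f : A →+* B} (hf : Function.Surjective f) : f.IsRingEpi :=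
  fun _ _ _ _ h => (RingHom.cancel_right hf).1 h

theorem comp {g : B →+* C} {f : A →+* B} (hg : g.IsRingEpi) (hf : f.IsRingEpi) :
    (g.comp f).IsRingEpi := by
  intro T _ u v h
  refine hg T u v (hf T _ _ ?_)
  simpa only [RingHom.comp_assoc] using h

theorem of_comp {g : B →+* C} {f : A →+* B} (h : (g.comp f).IsRingEpi) : g.IsRingEpi := by
  intro T _ u v huv
  refine h T u v ?_
  simp only [← RingHom.comp_assoc, huv]

theorem of_ker_le {R S A B A' B' : Type u} [Ring R] [Ring S] [Ring A] [Ring B] [Ring A'] [Ring B']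
    {f : R →+* S} {p : R →+* A} {q : S →+* B} {g : A →+* B}
    {p' : R →+* A'} {q' : S →+* B'} {g' : A' →+* B'}
    (hg : g.IsRingEpi) (hp : Function.Surjective p) (hq : Function.Surjective q)
    (hq' : Function.Surjective q') (hkp : RingHom.ker p ≤ RingHom.ker p')
    (hkq : RingHom.ker q ≤ RingHom.ker q') (hpq : g.comp p = q.comp f)
    (hpq' : g'.comp p' = q'.comp f) : g'.IsRingEpi := by
  set π := p.liftOfSurjective hp ⟨p', hkp⟩
  set ρ := q.liftOfSurjective hq ⟨q', hkq⟩
  have hπ : π.comp p = p' := p.liftOfSurjective_comp hp _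
  have hρ : ρ.comp q = q' := q.liftOfSurjective_comp hq _
  have hρ_surj : Function.Surjective ρ := by
    rw [← hρ, RingHom.coe_comp] at hq'
    exact hq'.of_comp
  have hsquare : g'.comp π = ρ.comp g := by
    refine (RingHom.cancel_right hp).1 ?_
    rw [RingHom.comp_assoc, hπ, hpq', RingHom.comp_assoc, hpq, ← RingHom.comp_assoc, hρ]
  exact of_comp (hsquare ▸ (of_surjective hρ_surj).comp hg)

end RingHom.IsRingEpi

theorem exists_subset_subset_of_antitone {ι X Y : Type*} [Preorder ι]
    (hdir : ∀ a b : ι, ∃ c, a ≤ c ∧ b ≤ c) {s : ι → Set X} {t : ι → Set Y}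
    (hs : Antitone s) (ht : Antitone t) {U : Set X} {V : Set Y}
    (hU : ∃ a, s a ⊆ U) (hV : ∃ b, t b ⊆ V) : ∃ c, s c ⊆ U ∧ t c ⊆ V := by
  obtain ⟨a, ha⟩ := hU
  obtain ⟨b, hb⟩ := hV
  obtain ⟨c, hac, hbc⟩ := hdir a b
  exact ⟨c, (hs hac).trans ha, (ht hbc).trans hb⟩

theorem proepimorphism_of_directed_base_general
    {R S : Type u} [Ring R] [Ring S] [TopologicalSpace R] [TopologicalSpace S]
    (f : R →+* S)
    (ι : Type u) [Preorder ι] (hdir : ∀ a b : ι, ∃ c, a ≤ c ∧ b ≤ c)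
    (A B : ι → Type u) [∀ a, Ring (A a)] [∀ a, Ring (B a)]
    (p : ∀ a, R →+* A a) (q : ∀ a, S →+* B a)
    (hpsurj : ∀ a, Function.Surjective (p a)) (hqsurj : ∀ a, Function.Surjective (q a))
    (hIbase : ∀ U ∈ nhds (0 : R), ∃ a, (⇑(p a) ⁻¹' {0} : Set R) ⊆ U)
    (hJbase : ∀ V ∈ nhds (0 : S), ∃ a, (⇑(q a) ⁻¹' {0} : Set S) ⊆ V)
    (hImono : ∀ a b : ι, a ≤ b → (⇑(p b) ⁻¹' {0} : Set R) ⊆ ⇑(p a) ⁻¹' {0})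
    (hJmono : ∀ a b : ι, a ≤ b → (⇑(q b) ⁻¹' {0} : Set S) ⊆ ⇑(q a) ⁻¹' {0})
    (g : ∀ a, A a →+* B a) (hg : ∀ a, (g a).comp (p a) = (q a).comp f)
    (hgepi : ∀ a, (g a).IsRingEpi) :
    ∀ (A' B' : Type u) [Ring A'] [Ring B'] (p' : R →+* A') (q' : S →+* B'),
      Function.Surjective p' → Function.Surjective q' →
      IsOpen (⇑p' ⁻¹' {0}) → IsOpen (⇑q' ⁻¹' {0}) →
      ⇑f '' (⇑p' ⁻¹' {0}) ⊆ ⇑q' ⁻¹' {0} →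
      ∀ g' : A' →+* B', g'.comp p' = q'.comp f → g'.IsRingEpi := by
  intro A' B' _ _ p' q' _ hq' hIopen hJopen _ g' hg'
  obtain ⟨c, hIc, hJc⟩ := exists_subset_subset_of_antitone hdir hImono hJmono
    (hIbase _ (hIopen.mem_nhds (by simp))) (hJbase _ (hJopen.mem_nhds (by simp)))
  exact (hgepi c).of_ker_le (hpsurj c) (hqsurj c) hq' hIc hJc (hg c) hg'

/-- Let `f : R → S` be a continuous homomorphism of two-sided linear topological
rings, and suppose given bases of neighborhoods of zero consisting of open
two-sided ideals `I_α ⊆ R` and `J_α ⊆ S` indexed by the same directed poset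
(the ideals being presented as kernels of surjective ring homomorphisms
`p_α : R → A_α` and `q_α : S → B_α` onto the quotient rings), decreasing along
the poset order, with `f(I_α) ⊆ J_α` and the induced quotient maps
`g_α : A_α = R/I_α → S/J_α = B_α` being ring epimorphisms.  Then for any open
two-sided ideals `I ⊆ R`, `J ⊆ S` with `f(I) ⊆ J` (again presented as kernels of
surjections `p : R → A'`, `q : S → B'`), the induced map `R/I → S/J` is a ring
epimorphism. -/
theorem proepimorphism_of_directed_base
    {R S : Type u} [Ring R] [Ring S] [TopologicalSpace R] [TopologicalSpace S]
    [IsTopologicalRing R] [IsTopologicalRing S] (f : R →+* S) (hcont : Continuous f)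
    (ι : Type u) [Preorder ι] (hdir : ∀ a b : ι, ∃ c, a ≤ c ∧ b ≤ c)
    (A B : ι → Type u) [∀ a, Ring (A a)] [∀ a, Ring (B a)]
    (p : ∀ a, R →+* A a) (q : ∀ a, S →+* B a)
    (hpsurj : ∀ a, Function.Surjective (p a)) (hqsurj : ∀ a, Function.Surjective (q a))
    (hIopen : ∀ a, IsOpen (⇑(p a) ⁻¹' {0})) (hJopen : ∀ a, IsOpen (⇑(q a) ⁻¹' {0}))
    (hIbase : ∀ U ∈ nhds (0 : R), ∃ a, (⇑(p a) ⁻¹' {0} : Set R) ⊆ U)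
    (hJbase : ∀ V ∈ nhds (0 : S), ∃ a, (⇑(q a) ⁻¹' {0} : Set S) ⊆ V)
    (hImono : ∀ a b : ι, a ≤ b → (⇑(p b) ⁻¹' {0} : Set R) ⊆ ⇑(p a) ⁻¹' {0})
    (hJmono : ∀ a b : ι, a ≤ b → (⇑(q b) ⁻¹' {0} : Set S) ⊆ ⇑(q a) ⁻¹' {0})
    (hfIJ : ∀ a, ⇑f '' (⇑(p a) ⁻¹' {0}) ⊆ ⇑(q a) ⁻¹' {0})
    (g : ∀ a, A a →+* B a) (hg : ∀ a, (g a).comp (p a) = (q a).comp f)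
    (hgepi : ∀ a, (g a).IsRingEpi) :
    ∀ (A' B' : Type u) [Ring A'] [Ring B'] (p' : R →+* A') (q' : S →+* B'),
      Function.Surjective p' → Function.Surjective q' →
      IsOpen (⇑p' ⁻¹' {0}) → IsOpen (⇑q' ⁻¹' {0}) →
      ⇑f '' (⇑p' ⁻¹' {0}) ⊆ ⇑q' ⁻¹' {0} →
      ∀ g' : A' →+* B', g'.comp p' = q'.comp f → g'.IsRingEpi :=
  proepimorphism_of_directed_base_general f ι hdir A B p q hpsurj hqsurj hIbase hJbase hImono hJmono
    g hg hgepi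
end

section
/- Let R be a commutative integral domain with fraction field Q, let S be a commutative ring, and let f : R → S be a ring homomorphism that is an epimorphism in the category of commutative rings. Then the induced map Q → Q ⊗_R S is an epimorphism of commutative rings. Consequently, if f is injective and S is an integral domain (so Q ⊗_R S ≠ 0), the map Q → Q ⊗_R S is an isomorphism; hence every element s ∈ S satisfies: there exist p, q ∈ R with q ≠ 0 and f(q)·s = f(p). -/
universe u

open scoped TensorProduct

/-- `f` is an epimorphism in the category of commutative (unital) rings. -/
def IsCommRingEpi {R S : Type u} [CommRing R] [CommRing S] (f : R →+* S) : Prop :=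
  ∀ (U : Type u) [CommRing U] (g h : S →+* U), g.comp f = h.comp f → g = h

/-!
Ring epimorphisms are stable under pushout, and `Q ⊗[R] S` is the pushout of `f` along `R → Q`.
An epimorphism `K → A` out of a field with `A ≠ 0` is surjective: `a ⊗ 1 = 1 ⊗ a` in `A ⊗[K] A`,
and applying a `K`-linear retraction `φ : A → K` of `K → A` to the left factor gives
`φ(a) • 1 = a`. If `f` is injective and `S` is a domain, `Q ⊗[R] S` is the localization of `S`
at `f(R ∖ 0)`, so `S` embeds into it; hence it is nonzero, and writing `1 ⊗ s` as the image of
`p / q` clears the denominators of `s`.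
-/

open Function Algebra.TensorProduct
open scoped nonZeroDivisors

theorem Algebra.IsEpi.surjective_algebraMap_of_field {K A : Type*} [Field K] [Ring A]
    [Nontrivial A] [Algebra K A] [Algebra.IsEpi K A] : Surjective (algebraMap K A) := by
  obtain ⟨φ, hφ⟩ := (Algebra.linearMap K A).exists_leftInverse_of_injective
    (LinearMap.ker_eq_bot.mpr (algebraMap K A).injective)
  have hφ_one : φ 1 = 1 := by simpa using LinearMap.congr_fun hφ 1
  let contract : A ⊗[K] A →ₗ[K] A :=
    _root_.TensorProduct.lid K A ∘ₗ _root_.TensorProduct.map φ LinearMap.id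
  intro a
  refine ⟨φ a, ?_⟩
  calc algebraMap K A (φ a) = contract (a ⊗ₜ 1) := by
        simp [contract, Algebra.algebraMap_eq_smul_one]
    _ = contract (1 ⊗ₜ a) := by rw [(Algebra.isEpi_iff_forall_one_tmul_eq K A).mp ‹_› a]
    _ = a := by simp [contract, hφ_one]

namespace IsCommRingEpi

variable {R S : Type u} [CommRing R] [CommRing S]

theorem isEpi [Algebra R S] (h : IsCommRingEpi (algebraMap R S)) : Algebra.IsEpi R S := by
  refine (Algebra.isEpi_iff_forall_one_tmul_eq R S).mpr fun s => ?_
  have := h (S ⊗[R] S) includeRight.toRingHom includeLeftRingHom <| by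
    ext r
    exact (tmul_one_eq_one_tmul r).symm
  exact RingHom.congr_fun this s

theorem bijective_of_field {K A : Type u} [Field K] [CommRing A] [Nontrivial A] {f : K →+* A}
    (hf : IsCommRingEpi f) : Bijective f :=
  letI := f.toAlgebra
  haveI := hf.isEpi
  ⟨f.injective, Algebra.IsEpi.surjective_algebraMap_of_field⟩

theorem baseChange {A : Type u} [CommRing A] [Algebra R A] [Algebra R S]
    (h : IsCommRingEpi (algebraMap R S)) :
    IsCommRingEpi (includeLeftRingHom : A →+* A ⊗[R] S) := by
  intro U _ g₁ g₂ hleft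
  refine ringHom_ext hleft (h U _ _ ?_)
  have hR : (includeRight.toRingHom : S →+* A ⊗[R] S).comp (algebraMap R S) =
      (includeLeftRingHom : A →+* A ⊗[R] S).comp (algebraMap R A) := by
    ext r
    exact (tmul_one_eq_one_tmul r).symm
  rw [RingHom.comp_assoc, RingHom.comp_assoc, hR, ← RingHom.comp_assoc, ← RingHom.comp_assoc,
    hleft]

end IsCommRingEpi

section FractionRing

variable {R S Q : Type*} [CommRing R] [CommRing S] [Algebra R S]
  [CommRing Q] [Algebra R Q] [IsFractionRing R Q]

theorem injective_includeRight_of_isFractionRing [NoZeroDivisors S]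
    (hinj : Injective (algebraMap R S)) : Injective (includeRight : S →ₐ[R] Q ⊗[R] S) := by
  let := rightAlgebra (R := R) (A := Q) (B := S)
  exact IsLocalization.injective (M := Algebra.algebraMapSubmonoid S R⁰) (Q ⊗[R] S)
    (map_le_nonZeroDivisors_of_injective _ hinj le_rfl)

theorem exists_mul_eq_of_surjective_includeLeft
    (hS : Injective (includeRight : S →ₐ[R] Q ⊗[R] S))
    (hQ : Surjective (includeLeftRingHom : Q →+* Q ⊗[R] S)) (s : S) :
    ∃ p q : R, q ∈ R⁰ ∧ algebraMap R S q * s = algebraMap R S p := by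
  obtain ⟨c, hc⟩ := hQ (1 ⊗ₜ s)
  obtain ⟨⟨p, q⟩, hpq⟩ := IsLocalization.surj R⁰ c
  refine ⟨p, q, q.2, hS ?_⟩
  have := congrArg (includeLeftRingHom : Q →+* Q ⊗[R] S) hpq
  rw [map_mul, hc] at this
  simpa [tmul_one_eq_one_tmul, mul_comm] using this

end FractionRing

/-- Let `R` be a commutative domain with fraction field `Q`, and let
`f : R → S` be an epimorphism of commutative rings.  Then the induced map
`Q → Q ⊗_R S` is an epimorphism of commutative rings; consequently, if `f` is
injective and `S` is a domain, then `Q → Q ⊗_R S` is an isomorphism, and every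
`s ∈ S` satisfies: there exist `p, q ∈ R` with `q ≠ 0` and `f(q)·s = f(p)`. -/
theorem epi_pushout_to_fractionField
    (R S : Type u) [CommRing R] [IsDomain R] [CommRing S] (f : R →+* S)
    (hf : IsCommRingEpi f) :
    letI : Algebra R S := f.toAlgebra
    IsCommRingEpi
        (Algebra.TensorProduct.includeLeftRingHom :
          FractionRing R →+* (FractionRing R) ⊗[R] S) ∧
      (Function.Injective f → IsDomain S →
        Function.Bijective
            (Algebra.TensorProduct.includeLeftRingHom :
              FractionRing R →+* (FractionRing R) ⊗[R] S) ∧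
          ∀ s : S, ∃ p q : R, q ≠ 0 ∧ f q * s = f p) := by
  let : Algebra R S := f.toAlgebra
  have hepi : IsCommRingEpi (includeLeftRingHom : FractionRing R →+* FractionRing R ⊗[R] S) :=
    IsCommRingEpi.baseChange hf
  refine ⟨hepi, fun hinj _ => ?_⟩
  have hS := injective_includeRight_of_isFractionRing (Q := FractionRing R) hinj
  have : Nontrivial (FractionRing R ⊗[R] S) := hS.nontrivial
  have hbij := hepi.bijective_of_field
  refine ⟨hbij, fun s => ?_⟩
  obtain ⟨p, q, hq, h⟩ := exists_mul_eq_of_surjective_includeLeft hS hbij.2 s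
  exact ⟨p, q, nonZeroDivisors.ne_zero hq, h⟩
end

section
/- Let f : R → S be a continuous taut map of right linear topological rings, and let N be a discrete right S-module. Let I ⊆ R be an open right ideal such that the closure J of f(I)·S is an open right ideal of S. Then an element y ∈ N is annihilated by I (i.e., y·f(I) = 0) if and only if y is annihilated by J. -/
universe u

open MulOpposite

theorem Submodule.closure_span_subset_iff_of_isOpen {R M : Type*} [Ring R] [AddCommGroup M]
    [TopologicalSpace M] [SeparatelyContinuousAdd M] [Module R M] {P : Submodule R M}
    (hP : IsOpen (P : Set M)) {s : Set M} :
    closure (span R s : Set M) ⊆ P ↔ s ⊆ P := by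
  have hP_closed : IsClosed (P : Set M) := P.toAddSubgroup.isClosed_of_isOpen hP
  rw [hP_closed.closure_subset_iff, SetLike.coe_subset_coe, span_le]

def rightAnnihilator {S N : Type*} [Semiring S] [AddCommMonoid N] [Module Sᵐᵒᵖ N] (y : N) :
    Submodule Sᵐᵒᵖ S where
  carrier := {s | op s • y = 0}
  add_mem' {a b} ha hb := by
    change op (a + b) • y = 0
    rw [op_add, add_smul, ha, hb, add_zero]
  zero_mem' := zero_smul _ y
  smul_mem' c s hs := by
    change op (s * unop c) • y = 0
    rw [op_mul, op_unop, mul_smul, hs, smul_zero]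

@[simp]
theorem mem_rightAnnihilator {S N : Type*} [Semiring S] [AddCommMonoid N] [Module Sᵐᵒᵖ N]
    {y : N} {s : S} : s ∈ rightAnnihilator y ↔ op s • y = 0 :=
  Iff.rfl

theorem annihilated_by_I_iff_annihilated_by_closure_general
    {R S : Type u} [Ring R] [Ring S] [TopologicalSpace S]
    [IsTopologicalRing S]
    (f : R →+* S)
    (N : Type u) [AddCommGroup N] [Module Sᵐᵒᵖ N] (hN : IsDiscreteModule S N)
    (I : Submodule Rᵐᵒᵖ R)
    (y : N) :
    (∀ r ∈ I, op (f r) • y = 0) ↔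
      (∀ s ∈ closure (Submodule.span Sᵐᵒᵖ (⇑f '' (I : Set R)) : Set S), op s • y = 0) := by
  have hJ := Submodule.closure_span_subset_iff_of_isOpen (P := rightAnnihilator y) (hN y)
    (s := f '' (I : Set R))
  simp only [Set.subset_def, Set.forall_mem_image, SetLike.mem_coe, mem_rightAnnihilator] at hJ
  exact hJ.symm

/-- Let `f : R → S` be a continuous taut map of right linear topological rings,
`N` a discrete right `S`-module, and `I ⊆ R` an open right ideal such that the
closure `J` of `f(I)·S` is an open right ideal of `S`.  Then `y ∈ N` is
annihilated by `I` (acting through `f`) if and only if it is annihilated by `J`. -/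
theorem annihilated_by_I_iff_annihilated_by_closure
    {R S : Type u} [Ring R] [Ring S] [TopologicalSpace R] [TopologicalSpace S]
    [IsTopologicalRing R] [IsTopologicalRing S]
    (hR : IsRightLinearTopology R) (hS : IsRightLinearTopology S) (f : R →+* S)
    (hcont : Continuous f)
    (htaut : ∀ I : Submodule Rᵐᵒᵖ R, IsOpen (I : Set R) →
      IsOpen (closure (Submodule.span Sᵐᵒᵖ (⇑f '' (I : Set R)) : Set S)))
    (N : Type u) [AddCommGroup N] [Module Sᵐᵒᵖ N] (hN : IsDiscreteModule S N)
    (I : Submodule Rᵐᵒᵖ R) (hIopen : IsOpen (I : Set R))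
    (hJopen : IsOpen (closure (Submodule.span Sᵐᵒᵖ (⇑f '' (I : Set R)) : Set S)))
    (y : N) :
    (∀ r ∈ I, op (f r) • y = 0) ↔
      (∀ s ∈ closure (Submodule.span Sᵐᵒᵖ (⇑f '' (I : Set R)) : Set S), op s • y = 0) :=
  annihilated_by_I_iff_annihilated_by_closure_general f N hN I y
end

section
/- Let f : R → S be a continuous homomorphism of two-sided linear topological rings such that the functor of restriction of scalars from discrete right S-modules to discrete right R-modules is fully faithful. Then for any open two-sided ideals I ⊆ R and J ⊆ S with f(I) ⊆ J, the induced ring map R/I → S/J is a ring epimorphism. -/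
/-!
Two ring maps `φ, ψ : S → T` make `T` a right `S`-module in two ways, `t • s = t * φ s` and
`t • s = t * ψ s`. When `φ` and `ψ` have open kernel these modules are discrete, and when they
agree after `f` the identity of `T` is `R`-linear between them. Full faithfulness makes it
`S`-linear, and evaluating at `t = 1` gives `φ = ψ`. For the theorem take `φ = g₁ ∘ q` and
`ψ = g₂ ∘ q`, and cancel the surjection `q`.
-/

universe u

open MulOpposite

/-- A topological ring is two-sided linear if its open two-sided ideals form
a base of neighborhoods of zero. -/
def IsTwoSidedLinearTopology (R : Type u) [Ring R] [TopologicalSpace R] : Prop :=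
  ∀ U ∈ nhds (0 : R), ∃ I : TwoSidedIdeal R, IsOpen (I : Set R) ∧ (I : Set R) ⊆ U

open scoped Pointwise

section OpenKernel

variable {S B F : Type*} [AddGroup S] [TopologicalSpace S] [IsTopologicalAddGroup S]
  [AddZeroClass B] [FunLike F S B] [AddMonoidHomClass F S B]

/-- A homomorphism with open kernel is continuous for the discrete topology on its target. -/
theorem isOpen_preimage_of_isOpen_preimage_zero {q : F} (hq : IsOpen (q ⁻¹' {0})) (V : Set B) :
    IsOpen (q ⁻¹' V) := by
  have hunion : q ⁻¹' V = ⋃ s ∈ q ⁻¹' V, s +ᵥ q ⁻¹' {0} := by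
    ext x
    simp only [Set.mem_iUnion, Set.mem_preimage, exists_prop]
    constructor
    · exact fun hx => ⟨x, hx, 0, by simp, by simp⟩
    · rintro ⟨s, hs, k, hk, rfl⟩
      simp_all
  rw [hunion]
  exact isOpen_biUnion fun s _ => hq.left_addCoset s

end OpenKernel

section RightModule

variable {S T : Type u} [Ring S] [Ring T]

abbrev RingHom.rightModule (φ : S →+* T) : Module Sᵐᵒᵖ T :=
  Module.compHom T φ.op

theorem RingHom.rightModule_smul (φ : S →+* T) (s : S) (t : T) :
    (letI := φ.rightModule; MulOpposite.op s • t) = t * φ s :=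
  rfl

theorem RingHom.isDiscreteModule_rightModule [TopologicalSpace S] [IsTopologicalAddGroup S]
    (φ : S →+* T) (hφ : IsOpen (φ ⁻¹' {0})) :
    letI := φ.rightModule; IsDiscreteModule S T :=
  fun t => isOpen_preimage_of_isOpen_preimage_zero hφ {b | t * b = 0}

end RightModule

/-- Restriction of scalars is faithful, so on discrete modules full faithfulness means exactly
this. -/
def RingHom.IsFullOnDiscreteRestriction {R S : Type u} [Ring R] [Ring S] [TopologicalSpace S]
    (f : R →+* S) : Prop :=
  ∀ (M N : Type u) [AddCommGroup M] [AddCommGroup N] [Module Sᵐᵒᵖ M] [Module Sᵐᵒᵖ N],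
    IsDiscreteModule S M → IsDiscreteModule S N →
    ∀ h : M →+ N,
      (∀ (x : M) (r : R), h (MulOpposite.op (f r) • x) = MulOpposite.op (f r) • h x) →
      ∀ (x : M) (s : S), h (MulOpposite.op s • x) = MulOpposite.op s • h x

theorem RingHom.IsFullOnDiscreteRestriction.eq_of_comp_eq {R S T : Type u}
    [Ring R] [Ring S] [Ring T] [TopologicalSpace S] [IsTopologicalAddGroup S] {f : R →+* S}
    (hf : f.IsFullOnDiscreteRestriction) {φ ψ : S →+* T} (hφ : IsOpen (φ ⁻¹' {0}))
    (hψ : IsOpen (ψ ⁻¹' {0})) (hcomp : φ.comp f = ψ.comp f) : φ = ψ := by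
  have hlinear := @hf T T _ _ φ.rightModule ψ.rightModule
    (φ.isDiscreteModule_rightModule hφ) (ψ.isDiscreteModule_rightModule hψ) (AddMonoidHom.id T)
    fun t r => by
      simp only [AddMonoidHom.id_apply, RingHom.rightModule_smul]
      exact congrArg (t * ·) (RingHom.congr_fun hcomp r)
  ext s
  simpa [RingHom.rightModule_smul] using hlinear 1 s

theorem quotient_epi_of_fully_faithful_discrete_restriction_general
    {R S : Type u} [Ring R] [Ring S] [TopologicalSpace R] [TopologicalSpace S]
    [IsTopologicalRing S]
    (f : R →+* S)
    (hff : ∀ (M N : Type u) [AddCommGroup M] [AddCommGroup N]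
      [Module Sᵐᵒᵖ M] [Module Sᵐᵒᵖ N], IsDiscreteModule S M → IsDiscreteModule S N →
      ∀ h : M →+ N, (∀ (x : M) (r : R), h (op (f r) • x) = op (f r) • h x) →
        ∀ (x : M) (s : S), h (op s • x) = op s • h x) :
    ∀ (A B : Type u) [Ring A] [Ring B] (p : R →+* A) (q : S →+* B),
      Function.Surjective p → Function.Surjective q →
      IsOpen (⇑p ⁻¹' {0}) → IsOpen (⇑q ⁻¹' {0}) →
      ⇑f '' (⇑p ⁻¹' {0}) ⊆ ⇑q ⁻¹' {0} →
      ∀ g : A →+* B, g.comp p = q.comp f → g.IsRingEpi := by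
  intro A B _ _ p q _ hq_surj _ hq_open _ g hg T _ g₁ g₂ hg₁₂
  have hopen (g' : B →+* T) : IsOpen ((g'.comp q) ⁻¹' {0}) :=
    isOpen_preimage_of_isOpen_preimage_zero hq_open (g' ⁻¹' {0})
  have hcomp : (g₁.comp q).comp f = (g₂.comp q).comp f :=
    calc (g₁.comp q).comp f = (g₁.comp g).comp p := by rw [RingHom.comp_assoc, ← hg]; rfl
      _ = (g₂.comp g).comp p := by rw [hg₁₂]
      _ = (g₂.comp q).comp f := by rw [RingHom.comp_assoc, hg]; rfl
  exact (RingHom.cancel_right hq_surj).mp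
    ((show f.IsFullOnDiscreteRestriction from hff).eq_of_comp_eq (hopen g₁) (hopen g₂) hcomp)

/-- Let `f : R → S` be a continuous homomorphism of two-sided linear topological
rings such that restriction of scalars from discrete right `S`-modules to discrete
right `R`-modules is fully faithful (i.e., every additive `R`-linear map between
discrete right `S`-modules is `S`-linear).  Then for any open two-sided ideals
`I ⊆ R` and `J ⊆ S` with `f(I) ⊆ J` (presented as kernels of surjective ring maps
`p : R → A`, `q : S → B` onto the quotient rings), any induced ring map
`R/I → S/J` is a ring epimorphism. -/
theorem quotient_epi_of_fully_faithful_discrete_restriction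
    {R S : Type u} [Ring R] [Ring S] [TopologicalSpace R] [TopologicalSpace S]
    [IsTopologicalRing R] [IsTopologicalRing S]
    (hR : IsTwoSidedLinearTopology R) (hS : IsTwoSidedLinearTopology S)
    (f : R →+* S) (hcont : Continuous f)
    (hff : ∀ (M N : Type u) [AddCommGroup M] [AddCommGroup N]
      [Module Sᵐᵒᵖ M] [Module Sᵐᵒᵖ N], IsDiscreteModule S M → IsDiscreteModule S N →
      ∀ h : M →+ N, (∀ (x : M) (r : R), h (op (f r) • x) = op (f r) • h x) →
        ∀ (x : M) (s : S), h (op s • x) = op s • h x) :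
    ∀ (A B : Type u) [Ring A] [Ring B] (p : R →+* A) (q : S →+* B),
      Function.Surjective p → Function.Surjective q →
      IsOpen (⇑p ⁻¹' {0}) → IsOpen (⇑q ⁻¹' {0}) →
      ⇑f '' (⇑p ⁻¹' {0}) ⊆ ⇑q ⁻¹' {0} →
      ∀ g : A →+* B, g.comp p = q.comp f → g.IsRingEpi :=
  quotient_epi_of_fully_faithful_discrete_restriction_general f hff
end

section
/- Let f : R → S be a strongly right taut continuous map of two-sided linear topological rings which is a topological ring proepimorphism. Then the restriction-of-scalars functor from discrete right S-modules to discrete right R-modules is fully faithful: any R-linear map h : M → N between discrete right S-modules is S-linear. -/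
universe u

open MulOpposite

/-!
Fix `x` and `s`. Tautness gives an open ideal `I` with `x · f(I) = 0` such that the closure `J`
of `f(I) · S` is an open two-sided ideal. Annihilators of elements of a discrete module are
open, hence closed, right ideals; so `J` kills `x`, and `h` maps the `J`-torsion of `M` into
that of `N`. On both `J`-torsion modules `S` acts through `S/J`, and `R → S/J` is an
epimorphism because `R/I → S/J` is one. Finally, an additive map between modules over `B`
that is linear along an epimorphism `A → B` is `B`-linear: conjugation by the shear
`(v, w) ↦ (v, w + h v)` of `V × W` fixes the action of `A`, hence that of `B`.
-/

theorem RingHom.IsRingEpi.comp_of_surjective {A B C : Type u} [Ring A] [Ring B] [Ring C]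
    {g : B →+* C} (hg : g.IsRingEpi) {p : A →+* B} (hp : Function.Surjective p) :
    (g.comp p).IsRingEpi := fun T _ φ ψ hφψ =>
  hg T φ ψ <| (RingHom.cancel_right hp).1 hφψ

/-- Conjugation by `u` is a ring endomorphism fixing the image of `φ ∘ g`; as `g` is an
epimorphism, it fixes the image of `φ`. -/
theorem RingHom.IsRingEpi.commute_of_forall_commute_comp {A B T : Type u} [Ring A] [Ring B]
    [Ring T] {g : A →+* B} (hg : g.IsRingEpi) (φ : B →+* T) {u : T} (hu : IsUnit u)
    (hcomm : ∀ a, Commute u (φ (g a))) (b : B) : Commute u (φ b) := by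
  obtain ⟨u, rfl⟩ := hu
  let conj : T →+* T := MulSemiringAction.toRingHom (ConjAct Tˣ) T (ConjAct.toConjAct u)
  have conj_apply (t : T) : conj t = u * t * ↑u⁻¹ := ConjAct.units_smul_def _ t
  have hconj : conj.comp φ = φ := hg T _ _ <| RingHom.ext fun a => by
    simp only [RingHom.comp_apply, conj_apply, (hcomm a).eq, Units.mul_inv_cancel_right]
  have := congr($hconj b)
  rwa [RingHom.comp_apply, conj_apply, Units.mul_inv_eq_iff_eq_mul] at this

namespace AddMonoidHom

variable {V W : Type*} [AddCommGroup V] [AddCommGroup W]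

def offDiag (h : V →+ W) : AddMonoid.End (V × W) :=
  (inr V W).comp (h.comp (fst V W))

@[simp]
theorem offDiag_apply (h : V →+ W) (x : V × W) : offDiag h x = (0, h x.1) := rfl

theorem isUnit_one_add_offDiag (h : V →+ W) : IsUnit (1 + offDiag h) :=
  IsNilpotent.isUnit_one_add ⟨2, AddMonoidHom.ext fun x =>
    show offDiag h (offDiag h x) = 0 by simp⟩

theorem commute_offDiag_toAddMonoidEnd_iff {C : Type*} [Monoid C] [DistribMulAction C V]
    [DistribMulAction C W] (h : V →+ W) (c : C) :
    Commute (offDiag h) (DistribMulAction.toAddMonoidEnd C (V × W) c) ↔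
      ∀ v, h (c • v) = c • h v := by
  rw [Commute, SemiconjBy, DFunLike.ext_iff]
  change (∀ x, offDiag h (c • x) = c • offDiag h x) ↔ _
  constructor
  · intro hc v
    simpa using hc (v, 0)
  · intro hc x
    simp [hc]

end AddMonoidHom

def rightActionHom (S V : Type*) [Ring S] [AddCommGroup V] [Module Sᵐᵒᵖ V] :
    S →+* (AddMonoid.End V)ᵐᵒᵖ :=
  (RingHom.op (Module.toAddMonoidEnd Sᵐᵒᵖ V)).comp (RingEquiv.opOp S).toRingHom

theorem rightActionHom_apply {S V : Type*} [Ring S] [AddCommGroup V] [Module Sᵐᵒᵖ V] (s : S) :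
    rightActionHom S V s = op (DistribMulAction.toAddMonoidEnd Sᵐᵒᵖ V (op s)) :=
  rfl

theorem map_op_smul_of_isRingEpi_comp {R S B V W : Type u} [Ring R] [Ring S] [Ring B]
    [AddCommGroup V] [AddCommGroup W] [Module Sᵐᵒᵖ V] [Module Sᵐᵒᵖ W]
    {f : R →+* S} {q : S →+* B} (hqf : (q.comp f).IsRingEpi) (hq : Function.Surjective q)
    (hV : ∀ s, q s = 0 → ∀ v : V, op s • v = 0) (hW : ∀ s, q s = 0 → ∀ w : W, op s • w = 0)
    (h : V →+ W) (hf : ∀ v r, h (op (f r) • v) = op (f r) • h v) (s : S) (v : V) :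
    h (op s • v) = op s • h v := by
  have hker : RingHom.ker q ≤ RingHom.ker (rightActionHom S (V × W)) := fun t ht => by
    rw [RingHom.mem_ker] at ht ⊢
    rw [rightActionHom_apply, op_eq_zero_iff]
    exact AddMonoidHom.ext fun x => show op t • x = 0 from Prod.ext (hV t ht _) (hW t ht _)
  let ρ := q.liftOfSurjective hq ⟨rightActionHom S (V × W), hker⟩
  have hρ (t : S) : ρ (q t) = rightActionHom S (V × W) t := q.liftOfSurjective_comp_apply hq _ t
  have shear_commute_iff (t : S) :
      Commute (op (1 + h.offDiag)) (ρ (q t)) ↔ ∀ v, h (op t • v) = op t • h v := by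
    rw [hρ, rightActionHom_apply, commute_op, ← h.commute_offDiag_toAddMonoidEnd_iff]
    exact ⟨fun hc => by simpa using hc.sub_left (Commute.one_left _),
      (Commute.one_left _).add_left⟩
  refine (shear_commute_iff s).1 ?_ v
  exact hqf.commute_of_forall_commute_comp ρ (isUnit_op.2 h.isUnit_one_add_offDiag)
    (fun r => (shear_commute_iff (f r)).2 (hf · r)) (q s)

namespace TwoSidedIdeal

variable {R : Type*} [Ring R]

theorem preimage_mk'_zero (I : TwoSidedIdeal R) : ⇑I.ringCon.mk' ⁻¹' {0} = I :=
  Set.ext fun r => by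
    rw [Set.mem_preimage, Set.mem_singleton_iff, ← mem_ker, ker_ringCon_mk']
    rfl

def torsionBy (J : TwoSidedIdeal R) (M : Type*) [AddCommGroup M] [Module Rᵐᵒᵖ M] :
    Submodule Rᵐᵒᵖ M where
  carrier := {m | ∀ j ∈ J, MulOpposite.op j • m = 0}
  add_mem' ha hb j hj := by rw [smul_add, ha j hj, hb j hj, add_zero]
  zero_mem' _ _ := smul_zero _
  smul_mem' c m hm j hj := by
    rw [← mul_smul, ← MulOpposite.op_unop c, ← MulOpposite.op_mul]
    exact hm _ (J.mul_mem_left _ _ hj)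

theorem smul_eq_zero_of_mk'_eq_zero {J : TwoSidedIdeal R} {M : Type*} [AddCommGroup M]
    [Module Rᵐᵒᵖ M] {s : R} (hs : J.ringCon.mk' s = 0) (m : J.torsionBy M) :
    MulOpposite.op s • m = 0 :=
  Subtype.ext <| m.2 s <| by rwa [← SetLike.mem_coe, ← preimage_mk'_zero]

end TwoSidedIdeal

theorem IsDiscreteModule.mem_torsionBy {S N : Type u} [Ring S] [TopologicalSpace S]
    [IsTopologicalAddGroup S] [AddCommGroup N] [Module Sᵐᵒᵖ N] (hN : IsDiscreteModule S N)
    {J : TwoSidedIdeal S} {T : Set S}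
    (hJ : (J : Set S) = closure (Submodule.span Sᵐᵒᵖ T : Set S)) {y : N}
    (hy : ∀ t ∈ T, op t • y = 0) : y ∈ J.torsionBy N := by
  let annihilator : Submodule Sᵐᵒᵖ S :=
    { carrier := {t | op t • y = 0}
      add_mem' := fun ha hb => by rw [Set.mem_ofPred_eq, op_add, add_smul, ha, hb, add_zero]
      zero_mem' := by rw [Set.mem_ofPred_eq, op_zero, zero_smul]
      smul_mem' := fun c t ht => by
        change op (t * unop c) • y = 0
        rw [op_mul, op_unop, mul_smul, ht, smul_zero] }
  have hclosed : IsClosed (annihilator : Set S) :=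
    annihilator.toAddSubgroup.isClosed_of_isOpen (hN y)
  intro j hj
  rw [← SetLike.mem_coe, hJ] at hj
  exact closure_minimal (Submodule.span_le.2 fun t ht => hy t ht) hclosed hj

theorem discrete_restriction_fully_faithful_of_proepimorphism_general
    {R S : Type u} [Ring R] [Ring S] [TopologicalSpace R] [TopologicalSpace S]
    [IsTopologicalRing S]
    (f : R →+* S) (hcont : Continuous f)
    -- `f` is strongly right taut:
    (htaut : ∀ U ∈ nhds (0 : R), ∃ I : TwoSidedIdeal R,
      IsOpen (I : Set R) ∧ (I : Set R) ⊆ U ∧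
      ∃ J : TwoSidedIdeal S,
        (J : Set S) = closure (Submodule.span Sᵐᵒᵖ (⇑f '' (I : Set R)) : Set S) ∧
        IsOpen (J : Set S))
    -- `f` is a topological ring proepimorphism:
    (hproepi : ∀ (A B : Type u) [Ring A] [Ring B] (p : R →+* A) (q : S →+* B),
      Function.Surjective p → Function.Surjective q →
      IsOpen (⇑p ⁻¹' {0}) → IsOpen (⇑q ⁻¹' {0}) →
      ⇑f '' (⇑p ⁻¹' {0}) ⊆ ⇑q ⁻¹' {0} →
      ∀ g : A →+* B, g.comp p = q.comp f → g.IsRingEpi)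
    (M N : Type u) [AddCommGroup M] [AddCommGroup N]
    [Module Sᵐᵒᵖ M] [Module Sᵐᵒᵖ N]
    (hM : IsDiscreteModule S M) (hN : IsDiscreteModule S N)
    (h : M →+ N) (hRlin : ∀ (x : M) (r : R), h (op (f r) • x) = op (f r) • h x) :
    ∀ (x : M) (s : S), h (op s • x) = op s • h x := by
  intro x s
  have hx : ⇑f ⁻¹' {t | op t • x = 0} ∈ nhds (0 : R) :=
    hcont.continuousAt.preimage_mem_nhds <| by
      rw [map_zero]; exact (hM x).mem_nhds (by rw [Set.mem_ofPred_eq, op_zero, zero_smul])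
  obtain ⟨I, hIo, hIx, J, hJ, hJo⟩ := htaut _ hx
  have hfIJ : ⇑f '' I ⊆ J := by
    rw [hJ]; exact Submodule.subset_span.trans subset_closure
  have hIJ : I.ringCon ≤ RingCon.ker (J.ringCon.mk'.comp f) := by
    rw [← RingCon.comap_eq]
    intro a b hab
    rw [RingCon.comap_rel, J.rel_iff, ← map_sub]
    exact hfIJ ⟨_, (I.rel_iff a b).1 hab, rfl⟩
  have hepi : (J.ringCon.mk'.comp f).IsRingEpi :=
    (hproepi _ _ _ _ I.ringCon.mk'_surjective J.ringCon.mk'_surjective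
      (by rwa [I.preimage_mk'_zero]) (by rwa [J.preimage_mk'_zero])
      (by rwa [I.preimage_mk'_zero, J.preimage_mk'_zero]) (I.ringCon.lift _ hIJ)
      rfl).comp_of_surjective I.ringCon.mk'_surjective
  have hxJ : x ∈ J.torsionBy M := hM.mem_torsionBy hJ fun _ ⟨r, hr, hrt⟩ => hrt ▸ hIx hr
  have hhJ (m : J.torsionBy M) : h m ∈ J.torsionBy N :=
    hN.mem_torsionBy hJ fun _ ⟨r, hr, hrt⟩ => by
      rw [← hrt, ← hRlin, m.2 _ (hfIJ ⟨r, hr, rfl⟩), map_zero]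
  let h' : J.torsionBy M →+ J.torsionBy N :=
    (h.comp (J.torsionBy M).subtype.toAddMonoidHom).codRestrict _ hhJ
  exact congrArg Subtype.val <| map_op_smul_of_isRingEpi_comp hepi J.ringCon.mk'_surjective
    (fun _ hs => TwoSidedIdeal.smul_eq_zero_of_mk'_eq_zero hs)
    (fun _ hs => TwoSidedIdeal.smul_eq_zero_of_mk'_eq_zero hs) h'
    (fun m r => Subtype.ext (hRlin m r)) s ⟨x, hxJ⟩

/-- Let `f : R → S` be a strongly right taut continuous map of two-sided linear
topological rings which is a topological ring proepimorphism (for any open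
two-sided ideals `I ⊆ R`, `J ⊆ S` with `f(I) ⊆ J`, presented as kernels of
surjections onto the quotient rings, the induced map `R/I → S/J` is a ring
epimorphism).  Then the restriction-of-scalars functor from discrete right
`S`-modules to discrete right `R`-modules is fully faithful: any `R`-linear
additive map `h : M → N` between discrete right `S`-modules is `S`-linear. -/
theorem discrete_restriction_fully_faithful_of_proepimorphism
    {R S : Type u} [Ring R] [Ring S] [TopologicalSpace R] [TopologicalSpace S]
    [IsTopologicalRing R] [IsTopologicalRing S]
    (hR : IsTwoSidedLinearTopology R) (hS : IsTwoSidedLinearTopology S)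
    (f : R →+* S) (hcont : Continuous f)
    -- `f` is strongly right taut:
    (htaut : ∀ U ∈ nhds (0 : R), ∃ I : TwoSidedIdeal R,
      IsOpen (I : Set R) ∧ (I : Set R) ⊆ U ∧
      ∃ J : TwoSidedIdeal S,
        (J : Set S) = closure (Submodule.span Sᵐᵒᵖ (⇑f '' (I : Set R)) : Set S) ∧
        IsOpen (J : Set S))
    -- `f` is a topological ring proepimorphism:
    (hproepi : ∀ (A B : Type u) [Ring A] [Ring B] (p : R →+* A) (q : S →+* B),
      Function.Surjective p → Function.Surjective q →
      IsOpen (⇑p ⁻¹' {0}) → IsOpen (⇑q ⁻¹' {0}) →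
      ⇑f '' (⇑p ⁻¹' {0}) ⊆ ⇑q ⁻¹' {0} →
      ∀ g : A →+* B, g.comp p = q.comp f → g.IsRingEpi)
    (M N : Type u) [AddCommGroup M] [AddCommGroup N]
    [Module Sᵐᵒᵖ M] [Module Sᵐᵒᵖ N]
    (hM : IsDiscreteModule S M) (hN : IsDiscreteModule S N)
    (h : M →+ N) (hRlin : ∀ (x : M) (r : R), h (op (f r) • x) = op (f r) • h x) :
    ∀ (x : M) (s : S), h (op s • x) = op s • h x :=
  discrete_restriction_fully_faithful_of_proepimorphism_general f hcont htaut hproepi M N hM hN h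
    hRlin
end

section
/- Let R be a commutative Noetherian ring and I ⊆ R an ideal, and let f : R → S be a homomorphism of commutative rings such that the ideal J = S·f(I) ⊆ S makes S a J-adically (and R an I-adically) complete separated ring, with J generated by the image of I. If P is an S-module whose underlying R-module is an I-contramodule (i.e., Hom_R(R[s⁻¹], P) = 0 = Ext¹_R(R[s⁻¹], P) for all s ∈ I), then P is a J-contramodule S-module. -/
universe u

open CategoryTheory

/-- An `R`-module `P` is an `I`-contramodule if, for every `s ∈ I`,
`Hom_R(R[s⁻¹], P) = 0 = Ext¹_R(R[s⁻¹], P)`, where `R[s⁻¹]` is the localization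
of `R` at `{1, s, s², …}`. -/
def IsContramoduleModule (R : Type u) [CommRing R] (I : Ideal R) (P : Type u)
    [AddCommGroup P] [Module R P] : Prop :=
  ∀ s ∈ I,
    (∀ g : Localization.Away s →ₗ[R] P, g = 0) ∧
    Subsingleton
      (((Ext R (ModuleCat.{u} R) 1).obj
          (Opposite.op (ModuleCat.of R (Localization.Away s)))).obj
        (ModuleCat.of R P))

/-!
For `s ∈ R`, the free resolution `0 → R[X] --(1 - sX)--> R[X] → R[s⁻¹] → 0` identifies the
condition `Hom_R(R[s⁻¹], P) = 0 = Ext¹_R(R[s⁻¹], P)` with bijectivity of the telescope map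
`(pₙ) ↦ (pₙ - s • pₙ₊₁)` on `P^ℕ`. This only depends on how `s` acts on `P`, so it holds for `s`
over `R` iff it holds for `f s` over `S`, and it suffices to show that the scalars satisfying it
form an ideal. Closure under sums `t = a + b` is the real point. The kernel and cokernel of the
telescope map of `t` again satisfy the condition for `a` and `b`, and `t` acts invertibly on them.
On such a module, `u = t⁻¹a` and `v = t⁻¹b` commute, have bijective telescope maps and
`u + v = 1`; so `v = 1 - u` is surjective, and iterating a right inverse of a surjective `v`
produces elements of the kernel of its telescope map, which forces the module to vanish.
-/

open Limits ZeroObject Function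

noncomputable section

section Telescope

variable {S : Type*} [Ring S] {M : Type*} [AddCommGroup M] [Module S M]

def telescope (φ : Module.End S M) : Module.End S (ℕ → M) :=
  1 - φ.compLeft ℕ * LinearMap.funLeft S M Nat.succ

@[simp]
lemma telescope_apply (φ : Module.End S M) (q : ℕ → M) (n : ℕ) :
    telescope φ q n = q n - φ (q (n + 1)) := rfl

lemma telescope_shift (φ : Module.End S M) (q : ℕ → M) :
    telescope φ (fun n => q (n + 1)) = fun n => telescope φ q (n + 1) := rfl

lemma telescope_map_of_commute {φ ψ : Module.End S M} (hc : Commute φ ψ) (q : ℕ → M) :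
    telescope φ (fun n => ψ (q n)) = fun n => ψ (telescope φ q n) := by
  funext n
  simp [← Module.End.mul_apply, hc.eq]

def IsContraEnd (φ : Module.End S M) : Prop :=
  Bijective (telescope φ)

lemma isContraEnd_zero : IsContraEnd (0 : Module.End S M) := by
  have : telescope (0 : Module.End S M) = 1 := by ext; simp
  rw [IsContraEnd, this]
  exact bijective_id

namespace IsContraEnd

variable {φ ψ : Module.End S M}

lemma mul_left (hφ : IsContraEnd φ) (hc : Commute φ ψ) : IsContraEnd (ψ * φ) := by
  have hpow (k : ℕ) (x : M) : φ ((ψ ^ (k + 1)) x) = (ψ ^ k) (ψ (φ x)) := by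
    rw [← Module.End.mul_apply, (hc.pow_right _).eq, pow_succ, mul_assoc]; rfl
  refine ⟨(injective_iff_map_eq_zero _).mpr fun p hp => funext fun n => ?_, fun q => ?_⟩
  · have hker : telescope φ (fun k => (ψ ^ k) (p (n + k))) = 0 := by
      funext k
      have hk : p (n + k) = ψ (φ (p (n + k + 1))) := sub_eq_zero.mp (congrFun hp (n + k))
      simp [← add_assoc, hpow, ← hk]
    simpa using congrFun ((injective_iff_map_eq_zero _).mp hφ.injective _ hker) 0
  · let e := LinearEquiv.ofBijective _ hφ
    let P (n : ℕ) : ℕ → M := e.symm fun k => (ψ ^ k) (q (n + k))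
    have hP (n : ℕ) : telescope φ (P n) = fun k => (ψ ^ k) (q (n + k)) := e.apply_symm_apply _
    have hshift (n : ℕ) : P n 1 = ψ (P (n + 1) 0) := by
      have : (fun k => P n (k + 1)) = fun k => ψ (P (n + 1) k) := hφ.injective <| by
        rw [telescope_shift, telescope_map_of_commute hc, hP, hP]
        funext k
        show (ψ ^ (k + 1)) (q (n + (k + 1))) = ψ ((ψ ^ k) (q (n + 1 + k)))
        rw [pow_succ', Module.End.mul_apply, Nat.add_right_comm, add_assoc]
      exact congrFun this 0
    refine ⟨fun n => P n 0, funext fun n => ?_⟩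
    have h0 := congrFun (hP n) 0
    simp only [telescope_apply, pow_zero, add_zero, Module.End.one_apply] at h0
    simp [← h0, hshift, ← Module.End.mul_apply, hc.eq]

lemma surjective_one_sub (hφ : IsContraEnd φ) : Surjective ⇑(1 - φ : Module.End S M) := by
  intro x
  let e := LinearEquiv.ofBijective _ hφ
  let p := e.symm fun _ => x
  have hx : telescope φ p = fun _ => x := e.apply_symm_apply _
  have hshift : (fun n => p (n + 1)) = p := hφ.injective <| by rw [telescope_shift, hx]
  refine ⟨p 0, ?_⟩
  simpa [← congrFun hshift 0] using congrFun hx 0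

lemma subsingleton_of_surjective (hφ : IsContraEnd φ) (hs : Surjective φ) : Subsingleton M := by
  refine subsingleton_of_forall_eq 0 fun x => ?_
  let g := surjInv hs
  have hker : telescope φ (fun n => g^[n] x) = 0 := by
    funext n
    simp [iterate_succ_apply', g, surjInv_eq hs]
  simpa using congrFun ((injective_iff_map_eq_zero _).mp hφ.injective _ hker) 0

lemma subsingleton_of_isUnit_add (hφ : IsContraEnd φ) (hψ : IsContraEnd ψ) (hc : Commute φ ψ)
    (hu : IsUnit (φ + ψ)) : Subsingleton M := by
  obtain ⟨u, hu⟩ := hu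
  have hφu : Commute φ ↑u⁻¹ := by
    rw [Commute.units_inv_right_iff, hu]; exact (Commute.refl φ).add_right hc
  have hψu : Commute ψ ↑u⁻¹ := by
    rw [Commute.units_inv_right_iff, hu]; exact hc.symm.add_right (Commute.refl ψ)
  have hsum : 1 - ↑u⁻¹ * φ = ↑u⁻¹ * ψ := by
    rw [sub_eq_iff_eq_add', ← mul_add, ← hu, Units.inv_mul]
  exact (hψ.mul_left hψu).subsingleton_of_surjective (hsum ▸ (hφ.mul_left hφu).surjective_one_sub)

end IsContraEnd

end Telescope

section Scalar

variable {S : Type*} [CommRing S] {M N : Type*} [AddCommGroup M] [Module S M]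
  [AddCommGroup N] [Module S N] {a : S}

variable (M) in
def IsContramoduleAt (a : S) : Prop :=
  IsContraEnd (algebraMap S (Module.End S M) a)

lemma telescope_algebraMap_apply (a : S) (q : ℕ → M) (n : ℕ) :
    telescope (algebraMap S (Module.End S M) a) q n = q n - a • q (n + 1) := rfl

lemma telescope_algebraMap_comp (h : M →ₗ[S] N) (q : ℕ → M) :
    telescope (algebraMap S (Module.End S N) a) (fun n => h (q n)) =
      fun n => h (telescope (algebraMap S (Module.End S M) a) q n) := by
  funext n
  simp

namespace IsContramoduleAt

lemma pi (ι : Type*) (ha : IsContramoduleAt M a) : IsContramoduleAt (ι → M) a := by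
  have : ⇑(telescope (algebraMap S (Module.End S (ι → M)) a)) = (Equiv.piComm _).symm ∘
      Pi.map (fun _ => telescope (algebraMap S (Module.End S M) a)) ∘ Equiv.piComm _ := rfl
  rw [IsContramoduleAt, IsContraEnd, this]
  exact (Equiv.bijective _).comp ((Bijective.piMap fun _ => ha).comp (Equiv.bijective _))

lemma ker (h : M →ₗ[S] N) (hM : IsContramoduleAt M a) (hN : IsContramoduleAt N a) :
    IsContramoduleAt (LinearMap.ker h) a := by
  refine ⟨(injective_iff_map_eq_zero _).mpr fun q hq => funext fun n => Subtype.ext ?_, fun q => ?_⟩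
  · have : telescope (algebraMap S (Module.End S M) a) (fun n => (q n : M)) = 0 :=
      funext fun n => congrArg Subtype.val (congrFun hq n)
    exact congrFun ((injective_iff_map_eq_zero _).mp hM.injective _ this) n
  · obtain ⟨p, hp⟩ := hM.surjective fun n => (q n : M)
    have hker : (fun n => h (p n)) = 0 := (injective_iff_map_eq_zero _).mp hN.injective _ <| by
      rw [telescope_algebraMap_comp, hp]
      exact funext fun n => (q n).2
    exact ⟨fun n => ⟨p n, congrFun hker n⟩, funext fun n => Subtype.ext (congrFun hp n)⟩

lemma quotient_range (h : M →ₗ[S] N) (hM : IsContramoduleAt M a) (hN : IsContramoduleAt N a) :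
    IsContramoduleAt (N ⧸ LinearMap.range h) a := by
  have hmk := telescope_algebraMap_comp (a := a) (LinearMap.range h).mkQ
  refine ⟨(injective_iff_map_eq_zero _).mpr fun q hq => ?_, fun q => ?_⟩
  · obtain ⟨v, rfl⟩ := (Submodule.mkQ_surjective _).comp_left q
    have hrange (n : ℕ) : telescope (algebraMap S (Module.End S N) a) v n ∈ LinearMap.range h := by
      rw [← Submodule.Quotient.mk_eq_zero, ← Submodule.mkQ_apply, ← congrFun (hmk v) n]
      exact congrFun hq n
    choose u hu using hrange
    obtain ⟨w, hw⟩ := hM.surjective u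
    have hv : (fun n => h (w n)) = v := hN.injective <| by
      rw [telescope_algebraMap_comp, hw, funext hu]
    funext n
    exact (Submodule.Quotient.mk_eq_zero _).mpr ⟨w n, congrFun hv n⟩
  · obtain ⟨v, rfl⟩ := (Submodule.mkQ_surjective _).comp_left q
    obtain ⟨p, hp⟩ := hN.surjective v
    exact ⟨fun n => (LinearMap.range h).mkQ (p n), by rw [hmk, hp]; rfl⟩

end IsContramoduleAt

lemma isUnit_algebraMap_ker_telescope (a : S) :
    IsUnit (algebraMap S
      (Module.End S (LinearMap.ker (telescope (algebraMap S (Module.End S M) a)))) a) := by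
  set T := telescope (algebraMap S (Module.End S M) a)
  let σ := LinearMap.funLeft S M Nat.succ
  have hσ (x) (hx : x ∈ LinearMap.ker T) : σ x ∈ LinearMap.ker T :=
    funext fun n => congrFun (LinearMap.mem_ker.mp hx) (n + 1)
  have hx (x : LinearMap.ker T) (n : ℕ) : a • (x : ℕ → M) (n + 1) = (x : ℕ → M) n :=
    (sub_eq_zero.mp (congrFun (LinearMap.mem_ker.mp x.2) n)).symm
  refine ⟨⟨_, σ.restrict hσ, ?_, ?_⟩, rfl⟩ <;>
    ext x n <;> simp [σ, hx]

lemma isUnit_algebraMap_quotient_range_telescope (a : S) :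
    IsUnit (algebraMap S (Module.End S
      ((ℕ → M) ⧸ LinearMap.range (telescope (algebraMap S (Module.End S M) a)))) a) := by
  set T := telescope (algebraMap S (Module.End S M) a)
  let σ := LinearMap.funLeft S M Nat.succ
  have hσ : LinearMap.range T ≤ (LinearMap.range T).comap σ := by
    rintro _ ⟨y, rfl⟩
    exact ⟨σ y, rfl⟩
  have hx (x : ℕ → M) :
      a • Submodule.Quotient.mk (p := LinearMap.range T) (σ x) = Submodule.Quotient.mk x := by
    rw [← Submodule.Quotient.mk_smul, Submodule.Quotient.eq]
    exact ⟨-x, by ext n; simp [T, σ, neg_add_eq_sub]⟩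
  refine ⟨⟨_, (LinearMap.range T).mapQ _ σ hσ, ?_, ?_⟩, rfl⟩ <;>
    ext x <;> simp [hx]

lemma IsContramoduleAt.add {b : S} (ha : IsContramoduleAt M a) (hb : IsContramoduleAt M b) :
    IsContramoduleAt M (a + b) := by
  set T := telescope (algebraMap S (Module.End S M) (a + b))
  have hker : Subsingleton (LinearMap.ker T) :=
    IsContraEnd.subsingleton_of_isUnit_add ((ha.pi ℕ).ker T (ha.pi ℕ)) ((hb.pi ℕ).ker T (hb.pi ℕ))
      (Algebra.commutes a _) (by rw [← map_add]; exact isUnit_algebraMap_ker_telescope _)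
  have hcoker : Subsingleton ((ℕ → M) ⧸ LinearMap.range T) :=
    IsContraEnd.subsingleton_of_isUnit_add ((ha.pi ℕ).quotient_range T (ha.pi ℕ))
      ((hb.pi ℕ).quotient_range T (hb.pi ℕ)) (Algebra.commutes a _)
      (by rw [← map_add]; exact isUnit_algebraMap_quotient_range_telescope _)
  exact ⟨LinearMap.ker_eq_bot.mp (Submodule.eq_bot_of_subsingleton),
    LinearMap.range_eq_top.mp (Submodule.Quotient.subsingleton_iff.mp hcoker)⟩

variable (S M) in
def contramoduleIdeal : Ideal S where
  carrier := {a | IsContramoduleAt M a}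
  zero_mem' := by
    show IsContraEnd _
    rw [map_zero]
    exact isContraEnd_zero
  add_mem' := IsContramoduleAt.add
  smul_mem' c a (ha : IsContraEnd _) := by
    show IsContraEnd _
    rw [smul_eq_mul, map_mul]
    exact ha.mul_left (Algebra.commutes a _)

end Scalar

lemma contramoduleIdeal_comap {R S M : Type*} [CommRing R] [CommRing S] (f : R →+* S)
    [AddCommGroup M] [Module R M] [Module S M] (hf : ∀ (r : R) (x : M), r • x = f r • x) :
    (contramoduleIdeal S M).comap f = contramoduleIdeal R M := by
  ext r
  have : ⇑(telescope (algebraMap S (Module.End S M) (f r))) =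
      telescope (algebraMap R (Module.End R M) r) := by
    funext q n
    simp [hf]
  exact Iff.of_eq (congrArg Bijective this)

namespace CategoryTheory.ShortComplex

variable {C : Type*} [Category* C] [Abelian C] (S : ShortComplex C)

def lengthOneComplexX : ℕ → C
  | 0 => S.X₂
  | 1 => S.X₁
  | _ + 2 => 0

def lengthOneComplexD : ∀ n : ℕ, S.lengthOneComplexX (n + 1) ⟶ S.lengthOneComplexX n
  | 0 => S.f
  | _ + 1 => 0

def lengthOneComplex : ChainComplex C ℕ :=
  ChainComplex.of S.lengthOneComplexX S.lengthOneComplexD fun _ => zero_comp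

instance [Projective S.X₁] [Projective S.X₂] (n : ℕ) : Projective (S.lengthOneComplex.X n) :=
  match n with
  | 0 => inferInstanceAs (Projective S.X₂)
  | 1 => inferInstanceAs (Projective S.X₁)
  | _ + 2 => inferInstanceAs (Projective (0 : C))

lemma lengthOneComplex_d_one_zero : S.lengthOneComplex.d 1 0 = S.f :=
  ChainComplex.of_d S.lengthOneComplexX S.lengthOneComplexD 0

variable {S}

def ShortExact.projectiveResolution (hS : S.ShortExact) [Projective S.X₁] [Projective S.X₂] :
    ProjectiveResolution S.X₃ where
  complex := S.lengthOneComplex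
  π := (ChainComplex.toSingle₀Equiv _ _).symm
    ⟨S.g, by rw [lengthOneComplex_d_one_zero]; exact S.zero⟩
  quasiIso := ⟨fun n => by
    cases n with
    | zero =>
      rw [ChainComplex.quasiIsoAt₀_iff, ShortComplex.quasiIso_iff_of_zeros']
      · refine (ShortComplex.exact_and_epi_g_iff_of_iso ?_).2 ⟨hS.exact, hS.epi_g⟩
        exact ShortComplex.isoMk (Iso.refl _) (Iso.refl _) (Iso.refl _)
          (by erw [Category.id_comp, Category.comp_id]; exact S.lengthOneComplex_d_one_zero.symm)
          (by erw [Category.id_comp, Category.comp_id]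
              exact (ChainComplex.toSingle₀Equiv_symm_apply_f_zero
                (C := S.lengthOneComplex) S.g _).symm)
      all_goals rfl
    | succ n =>
      rw [quasiIsoAt_iff_exactAt' _ _ (ChainComplex.exactAt_succ_single_obj _ _),
        HomologicalComplex.exactAt_iff' _ (n + 2) (n + 1) n (by simp) (by simp)]
      cases n with
      | zero =>
        rw [ShortComplex.exact_iff_mono _ ((isZero_zero C).eq_of_src _ _)]
        show Mono (S.lengthOneComplex.d 1 0)
        rw [lengthOneComplex_d_one_zero]
        exact hS.mono_f
      | succ n => exact ShortComplex.exact_of_isZero_X₂ _ (isZero_zero C)⟩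

lemma ShortExact.subsingleton_ext_one_iff {A : Type*} [Ring A] [Linear A C] [EnoughProjectives C]
    (hS : S.ShortExact) [Projective S.X₁] [Projective S.X₂] (Y : C) :
    Subsingleton (((Ext A C 1).obj (Opposite.op S.X₃)).obj Y) ↔
      Surjective fun g : S.X₂ ⟶ Y => S.f ≫ g := by
  let K := hS.projectiveResolution.complex.linearYonedaObj A Y
  have hK₂ : Subsingleton (K.X 2) := by
    show Subsingleton ((0 : C) ⟶ Y)
    infer_instance
  rw [← ModuleCat.isZero_iff_subsingleton,
    ((hS.projectiveResolution.isoExt (R := A) 1 Y).isZero_iff),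
    ← HomologicalComplex.exactAt_iff_isZero_homology,
    HomologicalComplex.exactAt_iff' _ 0 1 2 (by simp) (by simp),
    ShortComplex.moduleCat_exact_iff]
  have hd (g : S.X₂ ⟶ Y) : K.d 0 1 g = S.f ≫ g := by
    simp only [K, projectiveResolution, ChainComplex.linearYonedaObj_d, lengthOneComplex_d_one_zero]
    rfl
  exact ⟨fun h y => (h y (@Subsingleton.elim _ hK₂ _ _)).imp fun g hg => (hd g).symm.trans hg,
    fun h y _ => (h y).imp fun g hg => (hd g).trans hg⟩

end CategoryTheory.ShortComplex

section Presentation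

variable {A : Type u} [CommRing A] {F₁ F₀ M : Type u} [AddCommGroup F₁] [Module A F₁]
  [AddCommGroup F₀] [Module A F₀] [AddCommGroup M] [Module A M] {d : F₁ →ₗ[A] F₀}
  {π : F₀ →ₗ[A] M} (P : Type u) [AddCommGroup P] [Module A P]

lemma forall_eq_zero_iff_injective_lcomp (hex : Exact d π) (hπ : Surjective π) :
    (∀ g : M →ₗ[A] P, g = 0) ↔ Injective (LinearMap.lcomp A P d) := by
  have hlcomp := LinearMap.exact_lcomp_of_exact_of_surjective P hex hπ
  rw [injective_iff_map_eq_zero]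
  refine ⟨fun h g hg => ?_,
    fun h g => LinearMap.lcomp_injective_of_surjective (S := A) (N := P) π hπ ?_⟩
  · obtain ⟨g', rfl⟩ := (hlcomp g).mp hg
    rw [h g', map_zero]
  · rw [map_zero]
    exact h _ ((hlcomp _).mpr ⟨g, rfl⟩)

lemma subsingleton_ext_one_iff_surjective_lcomp [Module.Projective A F₁] [Module.Projective A F₀]
    (hd : Injective d) (hex : Exact d π) (hπ : Surjective π) :
    Subsingleton (((Ext A (ModuleCat.{u} A) 1).obj
        (Opposite.op (ModuleCat.of A M))).obj (ModuleCat.of A P)) ↔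
      Surjective (LinearMap.lcomp A P d) := by
  have hS : (ModuleCat.shortComplexOfCompEqZero d π hex.linearMap_comp_eq_zero).ShortExact :=
    { exact := (ShortComplex.ShortExact.moduleCat_exact_iff_function_exact _).mpr hex
      mono_f := (ModuleCat.mono_iff_injective _).mpr hd
      epi_g := (ModuleCat.epi_iff_surjective _).mpr hπ }
  rw [hS.subsingleton_ext_one_iff]
  refine ⟨fun h f => ?_, fun h g => ?_⟩
  · obtain ⟨g, hg⟩ := h (ModuleCat.ofHom f)
    exact ⟨g.hom, congrArg ModuleCat.Hom.hom hg⟩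
  · obtain ⟨f, hf⟩ := h g.hom
    exact ⟨ModuleCat.ofHom f, ModuleCat.hom_ext hf⟩

end Presentation

section Away

open Polynomial

variable {A : Type u} [CommRing A] (s : A)

def awayPresentation : A[X] →ₗ[A] Localization.Away s :=
  ((Localization.awayEquivAdjoin s).symm.toAlgHom.comp (AdjoinRoot.mkₐ (C s * X - 1))).toLinearMap

lemma surjective_awayPresentation : Surjective (awayPresentation s) :=
  (Localization.awayEquivAdjoin s).symm.surjective.comp (AdjoinRoot.mk_surjective)

lemma exact_mulLeft_awayPresentation :
    Exact (LinearMap.mulLeft A (1 - C s * X)) (awayPresentation s) := by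
  intro y
  have hneg : C s * X - 1 = -(1 - C s * X) := (neg_sub _ _).symm
  show (Localization.awayEquivAdjoin s).symm (AdjoinRoot.mk _ y) = 0 ↔ _
  rw [map_eq_zero_iff _ (AlgEquiv.injective _), AdjoinRoot.mk_eq_zero, hneg, neg_dvd]
  simp [dvd_def, eq_comm]

lemma injective_mulLeft_one_sub_C_mul_X : Injective (LinearMap.mulLeft A (1 - C s * X)) := by
  have : 1 - C s * X ∈ nonZeroDivisors A[X] :=
    mem_nonzeroDivisors_of_coeff_mem 0 (by simp [one_mem])
  exact (injective_iff_map_eq_zero _).mpr fun _ =>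
    (mul_left_mem_nonZeroDivisors_eq_zero_iff this).mp

variable (P : Type u) [AddCommGroup P] [Module A P]

lemma lcomp_mulLeft_constr (q : ℕ → P) :
    LinearMap.lcomp A P (LinearMap.mulLeft A (1 - C s * X)) ((basisMonomials A).constr A q) =
      (basisMonomials A).constr A (telescope (algebraMap A (Module.End A P) s) q) := by
  refine (basisMonomials A).ext fun n => ?_
  have : (1 - C s * X) * basisMonomials A n =
      basisMonomials A n - s • basisMonomials A (n + 1) := by
    simp only [coe_basisMonomials, sub_mul, one_mul, mul_assoc, X_mul_monomial, C_mul_monomial,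
      smul_monomial, smul_eq_mul, mul_one]
  simp only [LinearMap.lcomp_apply', LinearMap.comp_apply, LinearMap.mulLeft_apply, this, map_sub,
    map_smul, Module.Basis.constr_basis, telescope_algebraMap_apply]

theorem isContramoduleAt_iff :
    IsContramoduleAt P s ↔ (∀ g : Localization.Away s →ₗ[A] P, g = 0) ∧
      Subsingleton (((Ext A (ModuleCat.{u} A) 1).obj
        (Opposite.op (ModuleCat.of A (Localization.Away s)))).obj (ModuleCat.of A P)) := by
  let e := (basisMonomials A).constr (M' := P) A
  have hconj : ⇑(LinearMap.lcomp A P (LinearMap.mulLeft A (1 - C s * X))) =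
      e ∘ telescope (algebraMap A (Module.End A P) s) ∘ e.symm := by
    funext g
    simp only [comp_apply, e, ← lcomp_mulLeft_constr, LinearEquiv.apply_symm_apply]
  rw [forall_eq_zero_iff_injective_lcomp P (exact_mulLeft_awayPresentation s)
      (surjective_awayPresentation s),
    subsingleton_ext_one_iff_surjective_lcomp P (injective_mulLeft_one_sub_C_mul_X s)
      (exact_mulLeft_awayPresentation s) (surjective_awayPresentation s), hconj,
    EquivLike.comp_injective, EquivLike.injective_comp, EquivLike.comp_surjective,
    EquivLike.surjective_comp]
  rfl

end Away

lemma isContramoduleModule_iff {R : Type u} [CommRing R] (I : Ideal R) (P : Type u)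
    [AddCommGroup P] [Module R P] :
    IsContramoduleModule R I P ↔ I ≤ contramoduleIdeal R P :=
  forall₂_congr fun s _ => (isContramoduleAt_iff s P).symm

end

theorem contramodule_extension_of_scalars_general
    (R S : Type u) [CommRing R] [CommRing S]
    (I : Ideal R) (f : R →+* S)
    (P : Type u) [AddCommGroup P] [Module S P] :
    letI : Module R P := Module.compHom P f
    IsContramoduleModule R I P → IsContramoduleModule S (I.map f) P := by
  let _ : Module R P := Module.compHom P f
  rw [isContramoduleModule_iff, isContramoduleModule_iff, Ideal.map_le_iff_le_comap,
    contramoduleIdeal_comap f fun _ _ => rfl]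
  exact id

/-- Let `R` be a commutative Noetherian ring, `I ⊆ R` an ideal, and `f : R → S` a
homomorphism of commutative rings such that `R` is `I`-adically complete and
separated and `S` is complete and separated in the adic topology of the ideal
`J = S·f(I)` generated by the image of `I`.  If `P` is an `S`-module whose
underlying `R`-module is an `I`-contramodule, then `P` is a `J`-contramodule
`S`-module. -/
theorem contramodule_extension_of_scalars
    (R S : Type u) [CommRing R] [IsNoetherianRing R] [CommRing S]
    (I : Ideal R) (f : R →+* S)
    [IsAdicComplete I R] [IsAdicComplete (I.map f) S]
    (P : Type u) [AddCommGroup P] [Module S P] :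
    letI : Module R P := Module.compHom P f
    IsContramoduleModule R I P → IsContramoduleModule S (I.map f) P :=
  contramodule_extension_of_scalars_general R S I f P
end
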